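/- arXiv:2411.09832 — 4 statements merged into one kernel-verified Lean document; each statement's English description precedes it below -/
import Mathlib

section
/- For an interval hypergraph 𝕀 on [n], the hypergraphic poset P_𝕀 is a lattice (i.e., every pair of acyclic orientations of 𝕀 admits a least upper bound and a greatest lower bound in P_𝕀) if and only if 𝕀 is closed under intersection. -/
namespace IHL

/-- The hyperedges of a hypergraph, as a subtype. -/
abbrev Edge (𝕀 : Finset (Finset ℕ)) : Type := {H : Finset ℕ // H ∈ 𝕀}

/-- `ℋ` is a hypergraph on `[n] = {1,…,n}`: hyperedges are nonempty subsets of `[n]`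
and all singletons belong to `ℋ`. -/
def IsHypergraph (n : ℕ) (ℋ : Finset (Finset ℕ)) : Prop :=
  (∀ H ∈ ℋ, H.Nonempty ∧ H ⊆ Finset.Icc 1 n) ∧
    ∀ i, 1 ≤ i → i ≤ n → ({i} : Finset ℕ) ∈ ℋ

/-- `𝕀` is an interval hypergraph on `[n]`: hyperedges are intervals `[a,b] ⊆ [n]`
and all singletons belong to `𝕀`. -/
def IsIntervalHypergraph (n : ℕ) (𝕀 : Finset (Finset ℕ)) : Prop :=
  (∀ H ∈ 𝕀, ∃ a b, 1 ≤ a ∧ a ≤ b ∧ b ≤ n ∧ H = Finset.Icc a b) ∧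
    ∀ i, 1 ≤ i → i ≤ n → ({i} : Finset ℕ) ∈ 𝕀

/-- An orientation assigns to each hyperedge one of its elements. -/
def IsOrientation (𝕀 : Finset (Finset ℕ)) (O : Edge 𝕀 → ℕ) : Prop :=
  ∀ H : Edge 𝕀, O H ∈ H.1

/-- Acyclicity: there is no cyclic sequence `H_0, …, H_k` with `k ≥ 2`, `H_k = H_0`, and
`O (H (p+1)) ∈ H p \ {O (H p)}` for all `p < k`. -/
def IsAcyclic (𝕀 : Finset (Finset ℕ)) (O : Edge 𝕀 → ℕ) : Prop :=
  ¬∃ (k : ℕ) (H : ℕ → Edge 𝕀), 2 ≤ k ∧ H k = H 0 ∧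
    ∀ p < k, O (H (p + 1)) ∈ (H p).1 ∧ O (H (p + 1)) ≠ O (H p)

/-- An acyclic orientation, i.e. an element of the hypergraphic poset. -/
def AcycOr (𝕀 : Finset (Finset ℕ)) (O : Edge 𝕀 → ℕ) : Prop :=
  IsOrientation 𝕀 O ∧ IsAcyclic 𝕀 O

/-- Increasing flip from `O` to `O'` flipping `i` to `j`. -/
def IsIncFlip (n : ℕ) (𝕀 : Finset (Finset ℕ)) (i j : ℕ) (O O' : Edge 𝕀 → ℕ) : Prop :=
  O ≠ O' ∧ 1 ≤ i ∧ i < j ∧ j ≤ n ∧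
    ∀ H : Edge 𝕀,
      (O H ≠ O' H → O H = i ∧ O' H = j) ∧
      (i ∈ H.1 → j ∈ H.1 → (O H = i ↔ O' H = j))

/-- One increasing flip step between acyclic orientations. -/
def FlipStep (n : ℕ) (𝕀 : Finset (Finset ℕ)) (O O' : Edge 𝕀 → ℕ) : Prop :=
  AcycOr 𝕀 O ∧ AcycOr 𝕀 O' ∧ ∃ i j, IsIncFlip n 𝕀 i j O O'

/-- The order of the hypergraphic poset `P_𝕀`: reflexive-transitive closure of
the increasing flip relation on acyclic orientations. -/
def leP (n : ℕ) (𝕀 : Finset (Finset ℕ)) : (Edge 𝕀 → ℕ) → (Edge 𝕀 → ℕ) → Prop :=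
  Relation.ReflTransGen (FlipStep n 𝕀)

/-- Strict order of the hypergraphic poset. -/
def ltP (n : ℕ) (𝕀 : Finset (Finset ℕ)) (A B : Edge 𝕀 → ℕ) : Prop :=
  leP n 𝕀 A B ∧ A ≠ B

/-- `B` covers `A` in `P_𝕀`. -/
def CoversP (n : ℕ) (𝕀 : Finset (Finset ℕ)) (A B : Edge 𝕀 → ℕ) : Prop :=
  ltP n 𝕀 A B ∧ ¬∃ C, AcycOr 𝕀 C ∧ ltP n 𝕀 A C ∧ ltP n 𝕀 C B

/-- `𝕀` is closed under intersection. -/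
def ClosedUnderIntersection (𝕀 : Finset (Finset ℕ)) : Prop :=
  ∀ I ∈ 𝕀, ∀ J ∈ 𝕀, (I ∩ J).Nonempty → I ∩ J ∈ 𝕀

/-- `π` is a permutation of `[n]` (it fixes everything outside `[1,n]`). -/
def IsPermOn (n : ℕ) (π : Equiv.Perm ℕ) : Prop :=
  ∀ x, x ∉ Finset.Icc 1 n → π x = x

/-- The surjection `Or` from permutations to acyclic orientations:
`Or_π (H) = π (min {p : π p ∈ H})`. -/
noncomputable def orMap (𝕀 : Finset (Finset ℕ)) (π : Equiv.Perm ℕ) : Edge 𝕀 → ℕ :=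
  fun H => π (sInf {p | π p ∈ H.1})

/-- The weak order on permutations of `[n]`, via inclusion of inversion sets. -/
def weakLe (n : ℕ) (σ τ : Equiv.Perm ℕ) : Prop :=
  ∀ a b, 1 ≤ a → a < b → b ≤ n → σ.symm b < σ.symm a → τ.symm b < τ.symm a

/-- `π` contains the pattern 231. -/
def Contains231 (n : ℕ) (π : Equiv.Perm ℕ) : Prop :=
  ∃ p q r, 1 ≤ p ∧ p < q ∧ q < r ∧ r ≤ n ∧ π r < π p ∧ π p < π q

/-- `π` contains the pattern 213. -/
def Contains213 (n : ℕ) (π : Equiv.Perm ℕ) : Prop :=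
  ∃ p q r, 1 ≤ p ∧ p < q ∧ q < r ∧ r ≤ n ∧ π q < π p ∧ π p < π r

/-- The partial order `≺_A`: transitive closure of `A H ≺ h` for `h ∈ H \ {A H}`. -/
def prec (𝕀 : Finset (Finset ℕ)) (A : Edge 𝕀 → ℕ) : ℕ → ℕ → Prop :=
  Relation.TransGen fun a b => ∃ H : Edge 𝕀, A H = a ∧ b ∈ H.1 ∧ b ≠ a

/-- The distributivity condition on interval hypergraphs: for all `I, J ∈ 𝕀` with
`I ⊈ J`, `J ⊈ I` and `I ∩ J ≠ ∅`, the intersection `I ∩ J` is in `𝕀` and is initial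
or final in any `K ∈ 𝕀` containing it. -/
def IsDistribHG (𝕀 : Finset (Finset ℕ)) : Prop :=
  ∀ I ∈ 𝕀, ∀ J ∈ 𝕀, ¬I ⊆ J → ¬J ⊆ I → (I ∩ J).Nonempty →
    (I ∩ J ∈ 𝕀 ∧ ∀ K ∈ 𝕀, I ∩ J ⊆ K → ((I ∩ J).min = K.min ∨ (I ∩ J).max = K.max))

/-- `j ∈ 𝒥_𝕀 = ⋃_{I ∈ 𝕀} (I \ {min I})`. -/
def InJI (𝕀 : Finset (Finset ℕ)) (j : ℕ) : Prop :=
  ∃ I ∈ 𝕀, j ∈ I ∧ ∃ y ∈ I, y < j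

/-- `Jj` is the interval `J_j = ⋂ {I ∈ 𝕀 : j ∈ I \ {min I}}`. -/
def IsJj (𝕀 : Finset (Finset ℕ)) (j : ℕ) (Jj : Finset ℕ) : Prop :=
  ∀ x, x ∈ Jj ↔ ∀ I ∈ 𝕀, j ∈ I → (∃ y ∈ I, y < j) → x ∈ I

/-- `Aj` is the orientation `A_j` (where `μj = min J_j`):
`A_j (J) = j` if `j ∈ J` and `min J = μ_j`, and `A_j (J) = min J` otherwise. -/
def IsAj (𝕀 : Finset (Finset ℕ)) (j μj : ℕ) (Aj : Edge 𝕀 → ℕ) : Prop :=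
  ∀ J : Edge 𝕀,
    (j ∈ J.1 ∧ IsLeast (J.1 : Set ℕ) μj → Aj J = j) ∧
    (¬(j ∈ J.1 ∧ IsLeast (J.1 : Set ℕ) μj) → IsLeast (J.1 : Set ℕ) (Aj J))

/-- `Jij` is the interval `J_{ij} = ⋂ {I ∈ 𝕀 : {i,j} ⊆ I}`. -/
def IsJij (𝕀 : Finset (Finset ℕ)) (i j : ℕ) (Jij : Finset ℕ) : Prop :=
  ∀ x, x ∈ Jij ↔ ∀ I ∈ 𝕀, i ∈ I → j ∈ I → x ∈ I

/-- `(i,j) ∈ ℐ𝒥_𝕀`, where `μij = min J_{ij}`: both lie in a common hyperedge and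
`i = max ([μ_{ij}, j) \ ⋃ {J \ {min J} : J ∈ 𝕀, J ⊆ [μ_{ij}, j)})`. -/
def InIJ (n : ℕ) (𝕀 : Finset (Finset ℕ)) (i j μij : ℕ) : Prop :=
  1 ≤ i ∧ i < j ∧ j ≤ n ∧ (∃ I ∈ 𝕀, i ∈ I ∧ j ∈ I) ∧
    IsGreatest {m | μij ≤ m ∧ m < j ∧
      ∀ J ∈ 𝕀, (∀ x ∈ J, μij ≤ x ∧ x < j) → m ∈ J → ∀ y ∈ J, m ≤ y} i

/-- `Aij` is the orientation `A_{ij}` (where `μij = min J_{ij}`):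
`A_{ij} (J) = j` if `j ∈ J` and `min J ≥ μ_{ij}`, and `A_{ij} (J) = min J` otherwise. -/
def IsAij (𝕀 : Finset (Finset ℕ)) (j μij : ℕ) (Aij : Edge 𝕀 → ℕ) : Prop :=
  ∀ J : Edge 𝕀,
    (j ∈ J.1 ∧ (∀ x ∈ J.1, μij ≤ x) → Aij J = j) ∧
    (¬(j ∈ J.1 ∧ (∀ x ∈ J.1, μij ≤ x)) → IsLeast (J.1 : Set ℕ) (Aij J))

/-- The reversal `x ↦ n - x + 1` on `[n]`. -/
def revPt (n x : ℕ) : ℕ := n - x + 1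

/-- The reversed hypergraph `ℋ↔`. -/
def revHG (n : ℕ) (ℋ : Finset (Finset ℕ)) : Finset (Finset ℕ) :=
  ℋ.image fun H => H.image (revPt n)

/-!
On intervals, a cycle of an orientation can be shortcut at its minimal vertex, so the acyclic
orientations are those without 2-cycles; and an acyclic `A ≤ B` (componentwise) is joined to `B`
by increasing flips, each raising the largest value of `A` still below `B`. Hence `P_𝕀` is the
componentwise order on 2-cycle-free orientations.

If `𝕀` is closed under intersection, the join of `A` and `B` is built greedily: the least vertex
lying weakly above `max A B` on every edge through it orients all these edges, and the remaining
edges are oriented recursively. No 2-cycle-free `D ≥ max A B` undercuts this choice, since such a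
`D` orients `H ∩ K` like `H` whenever `D H ∈ K`. Meets are joins for the reversed order of `ℕ`.

If `𝕀` is not closed, take crossing `[a,b], [c,d] ∈ 𝕀` with `[c,b] ∉ 𝕀` and `d` minimal. The
orientations preferring `b` on the edges inside `[c, ∞)`, resp. preferring `c`, have one upper
bound orienting `[a,b]` by `c` and another orienting `[c,d]` by `b`; a join would have to do both,
which is a 2-cycle.
-/

section SetSystem

variable {α E : Type*} {S : E → Finset α}

def NoTwoCycleOn (S : E → Finset α) (𝓔 : Finset E) (O : E → α) : Prop :=
  ∀ P ∈ 𝓔, ∀ Q ∈ 𝓔, O P ∈ S Q → O Q ∈ S P → O P = O Q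

theorem NoTwoCycleOn.mono {𝓔 𝓔' : Finset E} {O : E → α} (hO : NoTwoCycleOn S 𝓔 O)
    (h : 𝓔' ⊆ 𝓔) : NoTwoCycleOn S 𝓔' O :=
  fun P hP Q hQ => hO P (h hP) Q (h hQ)

variable [LinearOrder α]

theorem NoTwoCycleOn.sup_le_of_subset {𝓔 : Finset E} {A B : E → α}
    (hA : ∀ e ∈ 𝓔, A e ∈ S e) (hB : ∀ e ∈ 𝓔, B e ∈ S e)
    (hA2 : NoTwoCycleOn S 𝓔 A) (hB2 : NoTwoCycleOn S 𝓔 B) {K M : E} (hK : K ∈ 𝓔) (hM : M ∈ 𝓔)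
    (hMK : S M ⊆ S K) (h : A K ⊔ B K ∈ S M) : A K ⊔ B K ≤ A M ⊔ B M := by
  rcases le_total (A K) (B K) with hAB | hAB
  · rw [sup_of_le_right hAB] at h ⊢
    exact (hB2 K hK M hM h (hMK (hB M hM))).le.trans le_sup_right
  · rw [sup_of_le_left hAB] at h ⊢
    exact (hA2 K hK M hM h (hMK (hA M hM))).le.trans le_sup_left

/-- If `D e < x₀`, some edge `K ∋ D e` has `f K > D e`. As `D` orients `e ∩ K` by `D e`,
`hf_mono` puts `f K` outside `e`, hence above `x₀`; then `x₀ ∈ K`, against `f K ≤ x₀`. -/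
theorem le_of_least_dominating {𝓔 : Finset E}
    (hconv : ∀ e ∈ 𝓔, (S e : Set α).OrdConnected)
    (hinter : ∀ e ∈ 𝓔, ∀ e' ∈ 𝓔, (S e ∩ S e').Nonempty → ∃ e'' ∈ 𝓔, S e'' = S e ∩ S e')
    {f : E → α} (hf : ∀ e ∈ 𝓔, f e ∈ S e)
    (hf_mono : ∀ K ∈ 𝓔, ∀ M ∈ 𝓔, S M ⊆ S K → f K ∈ S M → f K ≤ f M)
    {x₀ : α} (hx₀ : ∀ e ∈ 𝓔, x₀ ∈ S e → f e ≤ x₀)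
    (hlt : ∀ e ∈ 𝓔, ∀ y ∈ S e, y < x₀ → ∃ K ∈ 𝓔, y ∈ S K ∧ y < f K)
    {D : E → α} (hD : ∀ e ∈ 𝓔, D e ∈ S e ∧ f e ≤ D e) (hD2 : NoTwoCycleOn S 𝓔 D)
    {e : E} (he : e ∈ 𝓔) (hx₀e : x₀ ∈ S e) : x₀ ≤ D e := by
  by_contra! hDe
  obtain ⟨K, hK, hDK, hfK⟩ := hlt e he (D e) (hD e he).1 hDe
  obtain ⟨M, hM, hMeq⟩ := hinter e he K hK ⟨D e, Finset.mem_inter.2 ⟨(hD e he).1, hDK⟩⟩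
  have hMe : S M ⊆ S e := hMeq ▸ Finset.inter_subset_left
  have hMK : S M ⊆ S K := hMeq ▸ Finset.inter_subset_right
  have hDM : D M = D e :=
    hD2 M hM e he (hMe (hD M hM).1) (hMeq ▸ Finset.mem_inter.2 ⟨(hD e he).1, hDK⟩)
  have hfKe : f K ∉ S e := fun h =>
    (hf_mono K hK M hM hMK (hMeq ▸ Finset.mem_inter.2 ⟨h, hf K hK⟩)).trans
      ((hD M hM).2.trans hDM.le) |>.not_gt hfK
  have hx₀fK : x₀ < f K := lt_of_not_ge fun h =>
    hfKe ((hconv e he).out (hD e he).1 hx₀e ⟨hfK.le, h⟩)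
  exact (hx₀ K hK ((hconv K hK).out hDK (hf K hK) ⟨hDe.le, hx₀fK.le⟩)).not_gt hx₀fK

theorem exists_least_noTwoCycleOn_ge (𝓔 : Finset E)
    (hconv : ∀ e ∈ 𝓔, (S e : Set α).OrdConnected)
    (hinter : ∀ e ∈ 𝓔, ∀ e' ∈ 𝓔, (S e ∩ S e').Nonempty → ∃ e'' ∈ 𝓔, S e'' = S e ∩ S e')
    {f : E → α} (hf : ∀ e ∈ 𝓔, f e ∈ S e)
    (hf_mono : ∀ K ∈ 𝓔, ∀ M ∈ 𝓔, S M ⊆ S K → f K ∈ S M → f K ≤ f M) :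
    ∃ g : E → α, (∀ e ∈ 𝓔, g e ∈ S e ∧ f e ≤ g e) ∧ NoTwoCycleOn S 𝓔 g ∧
      ∀ D : E → α, (∀ e ∈ 𝓔, D e ∈ S e ∧ f e ≤ D e) → NoTwoCycleOn S 𝓔 D →
        ∀ e ∈ 𝓔, g e ≤ D e := by
  classical
  induction 𝓔 using Finset.strongInduction with
  | H 𝓔 ih =>
  rcases 𝓔.eq_empty_or_nonempty with rfl | ⟨e₁, he₁⟩
  · exact ⟨f, by simp, by simp [NoTwoCycleOn], by simp⟩
  set cand := (𝓔.biUnion S).filter fun x => ∀ e ∈ 𝓔, x ∈ S e → f e ≤ x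
  have hV : (𝓔.biUnion S).Nonempty := ⟨f e₁, Finset.mem_biUnion.2 ⟨e₁, he₁, hf e₁ he₁⟩⟩
  have hcand : cand.Nonempty := ⟨_, Finset.mem_filter.2 ⟨Finset.max'_mem _ hV,
    fun e he _ => Finset.le_max' _ _ (Finset.mem_biUnion.2 ⟨e, he, hf e he⟩)⟩⟩
  set x₀ := cand.min' hcand
  obtain ⟨hx₀V, hx₀⟩ := Finset.mem_filter.1 (cand.min'_mem hcand)
  have hlt : ∀ e ∈ 𝓔, ∀ y ∈ S e, y < x₀ → ∃ K ∈ 𝓔, y ∈ S K ∧ y < f K := by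
    intro e he y hy hyx
    by_contra! h
    exact (cand.min'_le y (Finset.mem_filter.2 ⟨Finset.mem_biUnion.2 ⟨e, he, hy⟩, h⟩)).not_gt hyx
  obtain ⟨e₀, he₀, hx₀e₀⟩ := Finset.mem_biUnion.1 hx₀V
  set 𝓔' := 𝓔.filter (x₀ ∉ S ·)
  have h𝓔' : 𝓔' ⊆ 𝓔 := Finset.filter_subset _ _
  obtain ⟨g, hg, hg2, hgmin⟩ := ih 𝓔' (Finset.filter_ssubset.2 ⟨e₀, he₀, not_not.2 hx₀e₀⟩)
    (fun e he => hconv e (h𝓔' he))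
    (fun e he e' he' h => by
      obtain ⟨e'', he'', hS⟩ := hinter e (h𝓔' he) e' (h𝓔' he') h
      refine ⟨e'', Finset.mem_filter.2 ⟨he'', fun hx => ?_⟩, hS⟩
      exact (Finset.mem_filter.1 he).2 (Finset.mem_of_mem_inter_left (hS ▸ hx)))
    (fun e he => hf e (h𝓔' he)) (fun K hK M hM => hf_mono K (h𝓔' hK) M (h𝓔' hM))
  refine ⟨fun e => if x₀ ∈ S e then x₀ else g e, fun e he => ?_, ?_, fun D hD hD2 e he => ?_⟩
  · dsimp only
    split_ifs with h
    · exact ⟨h, hx₀ e he h⟩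
    · exact hg e (Finset.mem_filter.2 ⟨he, h⟩)
  · intro P hP Q hQ hPQ hQP
    by_cases hxP : x₀ ∈ S P <;> by_cases hxQ : x₀ ∈ S Q <;>
      simp only [hxP, hxQ, if_true, if_false] at hPQ hQP ⊢
    exact hg2 P (Finset.mem_filter.2 ⟨hP, hxP⟩) Q (Finset.mem_filter.2 ⟨hQ, hxQ⟩) hPQ hQP
  · dsimp only
    split_ifs with h
    · exact le_of_least_dominating hconv hinter hf hf_mono hx₀ hlt hD hD2 he h
    · exact hgmin D (fun e he => hD e (h𝓔' he)) (hD2.mono h𝓔') e (Finset.mem_filter.2 ⟨he, h⟩)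

theorem exists_least_noTwoCycleOn_sup_le (𝓔 : Finset E)
    (hconv : ∀ e ∈ 𝓔, (S e : Set α).OrdConnected)
    (hinter : ∀ e ∈ 𝓔, ∀ e' ∈ 𝓔, (S e ∩ S e').Nonempty → ∃ e'' ∈ 𝓔, S e'' = S e ∩ S e')
    {A B : E → α} (hA : ∀ e ∈ 𝓔, A e ∈ S e) (hB : ∀ e ∈ 𝓔, B e ∈ S e)
    (hA2 : NoTwoCycleOn S 𝓔 A) (hB2 : NoTwoCycleOn S 𝓔 B) :
    ∃ C : E → α, (∀ e ∈ 𝓔, C e ∈ S e ∧ A e ≤ C e ∧ B e ≤ C e) ∧ NoTwoCycleOn S 𝓔 C ∧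
      ∀ D : E → α, (∀ e ∈ 𝓔, D e ∈ S e ∧ A e ≤ D e ∧ B e ≤ D e) → NoTwoCycleOn S 𝓔 D →
        ∀ e ∈ 𝓔, C e ≤ D e := by
  have hf : ∀ e ∈ 𝓔, A e ⊔ B e ∈ S e := fun e he => by
    rcases max_choice (A e) (B e) with h | h <;> rw [h]
    exacts [hA e he, hB e he]
  obtain ⟨C, hC, hC2, hCmin⟩ := exists_least_noTwoCycleOn_ge 𝓔 hconv hinter (f := A ⊔ B) hf
    fun K hK M hM => NoTwoCycleOn.sup_le_of_subset hA hB hA2 hB2 hK hM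
  refine ⟨C, fun e he => ?_, hC2, fun D hD hD2 => hCmin D (fun e he => ?_) hD2⟩
  · exact ⟨(hC e he).1, sup_le_iff.1 (hC e he).2⟩
  · exact ⟨(hD e he).1, sup_le_iff.2 (hD e he).2⟩

end SetSystem

section ClosedWalk

variable {β : Type*} {R : β → β → Prop} {k : ℕ} {w : ℕ → β}

def IsClosedWalk (R : β → β → Prop) (k : ℕ) (w : ℕ → β) : Prop :=
  w k = w 0 ∧ ∀ p < k, R (w p) (w (p + 1))

theorem IsClosedWalk.rotate (hw : IsClosedWalk R k w) (hk : 0 < k) (r : ℕ) :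
    IsClosedWalk R k fun q => w ((q + r) % k) := by
  have hsucc : ∀ m, w ((m + 1) % k) = w (m % k + 1) := by
    intro m
    rw [← Nat.mod_add_mod]
    have h : m % k + 1 ≤ k := Nat.mod_lt m hk
    rcases h.lt_or_eq with h | h
    · rw [Nat.mod_eq_of_lt h]
    · rw [h, Nat.mod_self, hw.1]
  refine ⟨by simp only [Nat.add_mod_left, zero_add], fun q _ => ?_⟩
  show R (w ((q + r) % k)) (w ((q + 1 + r) % k))
  rw [add_right_comm, hsucc]
  exact hw.2 _ (Nat.mod_lt _ hk)

theorem IsClosedWalk.shortcut (hw : IsClosedWalk R k w) (hk : 3 ≤ k) (h02 : R (w 0) (w 2)) :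
    IsClosedWalk R (k - 1) fun q => if q = 0 then w 0 else w (q + 1) := by
  refine ⟨by simp only [show k - 1 ≠ 0 by omega, if_false, if_true, Nat.sub_add_cancel
    (show 1 ≤ k by omega), hw.1], fun p hp => ?_⟩
  rcases p with _ | p
  · simpa using h02
  · simpa using hw.2 (p + 2) (by omega)

end ClosedWalk

section IntervalHypergraph

variable {n : ℕ} {𝕀 : Finset (Finset ℕ)}

theorem IsIntervalHypergraph.ordConnected (h𝕀 : IsIntervalHypergraph n 𝕀) (H : Edge 𝕀) :
    (H.1 : Set ℕ).OrdConnected := by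
  obtain ⟨a, b, -, -, -, hH⟩ := h𝕀.1 H.1 H.2
  rw [hH, Finset.coe_Icc]
  exact Set.ordConnected_Icc

theorem IsIntervalHypergraph.nonempty (h𝕀 : IsIntervalHypergraph n 𝕀) (H : Edge 𝕀) :
    H.1.Nonempty := by
  obtain ⟨a, b, -, hab, -, hH⟩ := h𝕀.1 H.1 H.2
  exact ⟨a, hH ▸ Finset.mem_Icc.2 ⟨le_rfl, hab⟩⟩

theorem IsIntervalHypergraph.subset_Icc (h𝕀 : IsIntervalHypergraph n 𝕀) (H : Edge 𝕀) :
    H.1 ⊆ Finset.Icc 1 n := by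
  obtain ⟨a, b, ha, -, hb, hH⟩ := h𝕀.1 H.1 H.2
  rw [hH]
  exact Finset.Icc_subset_Icc ha hb

end IntervalHypergraph

section Acyclic

variable {𝕀 : Finset (Finset ℕ)} {O : Edge 𝕀 → ℕ}

def OrientedStep (O : Edge 𝕀 → ℕ) (P Q : Edge 𝕀) : Prop :=
  O Q ∈ P.1 ∧ O Q ≠ O P

theorem noTwoCycleOn_of_isAcyclic (hO : IsAcyclic 𝕀 O) : NoTwoCycleOn Subtype.val .univ O := by
  intro P _ Q _ hPQ hQP
  by_contra hne
  refine hO ⟨2, fun t => if t = 1 then Q else P, le_rfl, rfl, fun p hp => ?_⟩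
  interval_cases p <;> simp [hPQ, hQP, hne, Ne.symm hne]

/-- Otherwise `O P₀ ∈ P₁` by convexity, and `P₀, P₁` would be a 2-cycle. -/
theorem OrientedStep.trans_of_le (hconv : ∀ H : Edge 𝕀, (H.1 : Set ℕ).OrdConnected)
    (hor : IsOrientation 𝕀 O) (hO : NoTwoCycleOn Subtype.val .univ O) {P₀ P₁ P₂ : Edge 𝕀}
    (h₀₁ : OrientedStep O P₀ P₁) (h₁₂ : OrientedStep O P₁ P₂) (h₀ : O P₁ ≤ O P₀)
    (h₂ : O P₁ ≤ O P₂) : OrientedStep O P₀ P₂ := by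
  obtain ⟨h₁P₀, h₁₀⟩ := h₀₁
  have h₀₂ : O P₂ < O P₀ := lt_of_not_ge fun h => h₁₀ <| Eq.symm <|
    hO P₀ (by simp) P₁ (by simp) ((hconv P₁).out (hor P₁) h₁₂.1 ⟨h₀, h⟩) h₁P₀
  exact ⟨(hconv P₀).out h₁P₀ (hor P₀) ⟨h₂, h₀₂.le⟩, h₀₂.ne⟩

theorem not_isClosedWalk_of_noTwoCycleOn (hconv : ∀ H : Edge 𝕀, (H.1 : Set ℕ).OrdConnected)
    (hor : IsOrientation 𝕀 O) (hO : NoTwoCycleOn Subtype.val .univ O) :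
    ∀ k, 2 ≤ k → ∀ w, ¬IsClosedWalk (OrientedStep O) k w := by
  intro k
  induction k using Nat.strong_induction_on with
  | _ k ih =>
  intro hk w hw
  obtain ⟨p, hp, hpmin⟩ :=
    (Finset.range k).exists_min_image (O ∘ w) ⟨0, Finset.mem_range.2 (by omega)⟩
  have hw' := hw.rotate (by omega) (p + (k - 1))
  set w' := fun q => w ((q + (p + (k - 1))) % k)
  have hw'1 : w' 1 = w p := by
    simp only [w', show 1 + (p + (k - 1)) = p + k by omega, Nat.add_mod_right,
      Nat.mod_eq_of_lt (Finset.mem_range.1 hp)]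
  have hmin : ∀ q, O (w' 1) ≤ O (w' q) := fun q =>
    hw'1 ▸ hpmin _ (Finset.mem_range.2 (Nat.mod_lt _ (by omega)))
  have h₀₁ := hw'.2 0 (by omega)
  have h₁₂ := hw'.2 1 (by omega)
  rcases hk.lt_or_eq with hk | rfl
  · exact ih (k - 1) (by omega) (by omega) _ (hw'.shortcut hk
      (h₀₁.trans_of_le hconv hor hO h₁₂ (hmin 0) (hmin 2)))
  · rw [hw'.1] at h₁₂
    exact h₀₁.2 (hO _ (by simp) _ (by simp) h₀₁.1 h₁₂.1)

theorem acycOr_iff (hconv : ∀ H : Edge 𝕀, (H.1 : Set ℕ).OrdConnected) :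
    AcycOr 𝕀 O ↔ IsOrientation 𝕀 O ∧ NoTwoCycleOn Subtype.val .univ O :=
  ⟨fun h => ⟨h.1, noTwoCycleOn_of_isAcyclic h.2⟩, fun h => ⟨h.1, fun ⟨k, w, hk, hw⟩ =>
    not_isClosedWalk_of_noTwoCycleOn hconv h.1 h.2 k hk w hw⟩⟩

end Acyclic

section Flip

variable {n : ℕ} {𝕀 : Finset (Finset ℕ)} {A B : Edge 𝕀 → ℕ}

theorem FlipStep.le (h : FlipStep n 𝕀 A B) : A ≤ B := by
  obtain ⟨-, -, i, j, -, -, hij, -, hflip⟩ := h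
  intro H
  by_cases hAB : A H = B H
  · exact hAB.le
  · obtain ⟨hi, hj⟩ := (hflip H).1 hAB
    exact hi ▸ hj ▸ hij.le

theorem le_of_leP (h : leP n 𝕀 A B) : A ≤ B := by
  induction h with
  | refl => exact le_rfl
  | tail _ hstep ih => exact ih.trans hstep.le

theorem exists_lex_max {E α : Type*} [Fintype E] [LinearOrder α] {A B : E → α} (hAB : A ≤ B)
    (hne : A ≠ B) :
    ∃ H₀, A H₀ < B H₀ ∧ (∀ H, A H < B H → A H ≤ A H₀) ∧
      ∀ H, A H < B H → A H = A H₀ → B H ≤ B H₀ := by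
  classical
  set T := Finset.univ.filter fun H => A H < B H
  obtain ⟨H, hH⟩ := Function.ne_iff.1 hne
  obtain ⟨H₁, hH₁, hmax₁⟩ :=
    T.exists_max_image A ⟨H, by simpa [T] using lt_of_le_of_ne (hAB H) hH⟩
  obtain ⟨H₀, hH₀, hmax₀⟩ :=
    (T.filter fun H => A H = A H₁).exists_max_image B ⟨H₁, by simp [hH₁]⟩
  simp only [T, Finset.mem_filter, Finset.mem_univ, true_and] at hH₀ hmax₀ hmax₁
  exact ⟨H₀, hH₀.1, fun H h => (hmax₁ H h).trans_eq hH₀.2.symm,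
    fun H h hA => hmax₀ H ⟨h, hA.trans hH₀.2⟩⟩

def incFlip (A : Edge 𝕀 → ℕ) (i j : ℕ) : Edge 𝕀 → ℕ :=
  fun H => if i ∈ H.1 ∧ j ∈ H.1 ∧ A H = i then j else A H

theorem IsOrientation.incFlip (hA : IsOrientation 𝕀 A) (i j : ℕ) :
    IsOrientation 𝕀 (incFlip A i j) := fun H => by
  unfold IHL.incFlip
  split_ifs with hH
  exacts [hH.2.1, hA H]

variable {H₀ : Edge 𝕀}

theorem incFlip_apply_self (hA : IsOrientation 𝕀 A) (hB : IsOrientation 𝕀 B) :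
    incFlip A (A H₀) (B H₀) H₀ = B H₀ :=
  if_pos ⟨hA H₀, hB H₀, rfl⟩

theorem eq_of_flipped (hconv : ∀ H : Edge 𝕀, (H.1 : Set ℕ).OrdConnected)
    (hA : IsOrientation 𝕀 A) (hB : IsOrientation 𝕀 B) (hB2 : NoTwoCycleOn Subtype.val .univ B)
    (hAB : A ≤ B) (hlt : A H₀ < B H₀) (hj : ∀ H, A H < B H → A H = A H₀ → B H ≤ B H₀)
    {H : Edge 𝕀} (hH : A H₀ ∈ H.1 ∧ B H₀ ∈ H.1 ∧ A H = A H₀) : B H = B H₀ := by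
  obtain ⟨-, hjH, hAH⟩ := hH
  have hge : B H₀ ≤ B H := by
    by_contra! h
    have hBH : B H ∈ H₀.1 := (hconv H₀).out (hA H₀) (hB H₀) ⟨hAH ▸ hAB H, h.le⟩
    exact h.ne (hB2 H₀ (by simp) H (by simp) hjH hBH).symm
  exact le_antisymm (hj H ((hAH.trans_lt hlt).trans_le hge) hAH) hge

theorem incFlip_le (hconv : ∀ H : Edge 𝕀, (H.1 : Set ℕ).OrdConnected)
    (hA : IsOrientation 𝕀 A) (hB : IsOrientation 𝕀 B) (hB2 : NoTwoCycleOn Subtype.val .univ B)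
    (hAB : A ≤ B) (hlt : A H₀ < B H₀) (hj : ∀ H, A H < B H → A H = A H₀ → B H ≤ B H₀) :
    incFlip A (A H₀) (B H₀) ≤ B := by
  intro H
  unfold incFlip
  split_ifs with hH
  · exact (eq_of_flipped hconv hA hB hB2 hAB hlt hj hH).ge
  · exact hAB H

theorem le_incFlip (hlt : A H₀ < B H₀) : A ≤ incFlip A (A H₀) (B H₀) := by
  intro H
  unfold incFlip
  split_ifs with hH
  · exact hH.2.2.trans_le hlt.le
  · exact le_rfl

/-- All of `K` lies above `A H₀`, so `A K = B K` by the choice of `H₀`, and `H`, `K` would be a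
2-cycle of `B` unless `A K = B H₀`. -/
theorem eq_of_flipped_of_not_flipped (hconv : ∀ H : Edge 𝕀, (H.1 : Set ℕ).OrdConnected)
    (hA : IsOrientation 𝕀 A) (hB : IsOrientation 𝕀 B) (hA2 : NoTwoCycleOn Subtype.val .univ A)
    (hB2 : NoTwoCycleOn Subtype.val .univ B) (hAB : A ≤ B) (hlt : A H₀ < B H₀)
    (hi : ∀ H, A H < B H → A H ≤ A H₀) (hj : ∀ H, A H < B H → A H = A H₀ → B H ≤ B H₀)
    {H K : Edge 𝕀} (hH : A H₀ ∈ H.1 ∧ B H₀ ∈ H.1 ∧ A H = A H₀)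
    (hK : ¬(A H₀ ∈ K.1 ∧ B H₀ ∈ K.1 ∧ A K = A H₀)) (hjK : B H₀ ∈ K.1) (hKH : A K ∈ H.1) :
    A K = B H₀ := by
  have hiK : A H₀ ∉ K.1 := fun hiK => hK ⟨hiK, hjK,
    (hA2 H (by simp) K (by simp) (by rwa [hH.2.2]) hKH).symm.trans hH.2.2⟩
  have hK₀ : A H₀ < A K := lt_of_not_ge fun h => hiK ((hconv K).out (hA K) hjK ⟨h, hlt.le⟩)
  have hAK : A K = B K := (hAB K).eq_or_lt.elim id fun h => absurd (hi K h) hK₀.not_ge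
  have hBH := eq_of_flipped hconv hA hB hB2 hAB hlt hj hH
  rw [hAK, ← hB2 H (by simp) K (by simp) (by rwa [hBH]) (by rwa [← hAK]), hBH]

theorem noTwoCycleOn_incFlip (hconv : ∀ H : Edge 𝕀, (H.1 : Set ℕ).OrdConnected)
    (hA : IsOrientation 𝕀 A) (hB : IsOrientation 𝕀 B) (hA2 : NoTwoCycleOn Subtype.val .univ A)
    (hB2 : NoTwoCycleOn Subtype.val .univ B) (hAB : A ≤ B) (hlt : A H₀ < B H₀)
    (hi : ∀ H, A H < B H → A H ≤ A H₀) (hj : ∀ H, A H < B H → A H = A H₀ → B H ≤ B H₀) :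
    NoTwoCycleOn Subtype.val .univ (incFlip A (A H₀) (B H₀)) := by
  intro P _ Q _ hPQ hQP
  unfold incFlip at *
  split_ifs at hPQ hQP ⊢ with hP hQ hQ
  · rfl
  · exact (eq_of_flipped_of_not_flipped hconv hA hB hA2 hB2 hAB hlt hi hj hP hQ hPQ hQP).symm
  · exact eq_of_flipped_of_not_flipped hconv hA hB hA2 hB2 hAB hlt hi hj hQ hP hQP hPQ
  · exact hA2 P (by simp) Q (by simp) hPQ hQP

theorem isIncFlip_incFlip (h𝕀 : IsIntervalHypergraph n 𝕀) (hA : IsOrientation 𝕀 A)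
    (hB : IsOrientation 𝕀 B) (hA2 : NoTwoCycleOn Subtype.val .univ A) (hlt : A H₀ < B H₀) :
    IsIncFlip n 𝕀 (A H₀) (B H₀) A (incFlip A (A H₀) (B H₀)) := by
  refine ⟨fun h => hlt.ne (congrFun h H₀ |>.trans (incFlip_apply_self hA hB)),
    (Finset.mem_Icc.1 (h𝕀.subset_Icc H₀ (hA H₀))).1, hlt,
    (Finset.mem_Icc.1 (h𝕀.subset_Icc H₀ (hB H₀))).2, fun H => ⟨fun hne => ?_, fun hiH hjH => ?_⟩⟩
  · unfold incFlip at hne ⊢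
    split_ifs at hne ⊢ with hH
    · exact ⟨hH.2.2, rfl⟩
    · exact absurd rfl hne
  · unfold incFlip
    refine ⟨fun h => if_pos ⟨hiH, hjH, h⟩, fun h => ?_⟩
    split_ifs at h with hH
    · exact hH.2.2
    · exact absurd (hA2 H₀ (by simp) H (by simp) hiH (h ▸ hB H₀)) (h ▸ hlt.ne)

theorem leP_of_le (h𝕀 : IsIntervalHypergraph n 𝕀) (hA : AcycOr 𝕀 A) (hB : AcycOr 𝕀 B)
    (hAB : A ≤ B) : leP n 𝕀 A B := by
  have hconv := h𝕀.ordConnected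
  obtain ⟨hBor, hB2⟩ := (acycOr_iff hconv).1 hB
  suffices ∀ m A, AcycOr 𝕀 A → A ≤ B → ∑ H, (B H - A H) = m → leP n 𝕀 A B from
    this _ A hA hAB rfl
  intro m
  induction m using Nat.strong_induction_on with
  | _ m ih =>
  intro A hA hAB hm
  by_cases hne : A = B
  · exact hne ▸ Relation.ReflTransGen.refl
  obtain ⟨hAor, hA2⟩ := (acycOr_iff hconv).1 hA
  obtain ⟨H₀, hlt, hi, hj⟩ := exists_lex_max hAB hne
  set A' := incFlip A (A H₀) (B H₀)
  have hA' : AcycOr 𝕀 A' := (acycOr_iff hconv).2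
    ⟨hAor.incFlip _ _, noTwoCycleOn_incFlip hconv hAor hBor hA2 hB2 hAB hlt hi hj⟩
  refine .head ⟨hA, hA', _, _, isIncFlip_incFlip h𝕀 hAor hBor hA2 hlt⟩
    (ih _ ?_ A' hA' (incFlip_le hconv hAor hBor hB2 hAB hlt hj) rfl)
  rw [← hm]
  refine Finset.sum_lt_sum (fun H _ => Nat.sub_le_sub_left (le_incFlip hlt H) _)
    ⟨H₀, by simp, ?_⟩
  rw [show A' H₀ = B H₀ from incFlip_apply_self hAor hBor]
  omega

theorem leP_iff (h𝕀 : IsIntervalHypergraph n 𝕀) (hA : AcycOr 𝕀 A) (hB : AcycOr 𝕀 B) :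
    leP n 𝕀 A B ↔ A ≤ B :=
  ⟨le_of_leP, leP_of_le h𝕀 hA hB⟩

end Flip

section Closed

variable {n : ℕ} {𝕀 : Finset (Finset ℕ)} {A B : Edge 𝕀 → ℕ}

theorem exists_join (h𝕀 : IsIntervalHypergraph n 𝕀) (hI : ClosedUnderIntersection 𝕀)
    (hA : AcycOr 𝕀 A) (hB : AcycOr 𝕀 B) :
    ∃ C, AcycOr 𝕀 C ∧ leP n 𝕀 A C ∧ leP n 𝕀 B C ∧
      ∀ D, AcycOr 𝕀 D → leP n 𝕀 A D → leP n 𝕀 B D → leP n 𝕀 C D := by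
  have hconv := h𝕀.ordConnected
  obtain ⟨hAor, hA2⟩ := (acycOr_iff hconv).1 hA
  obtain ⟨hBor, hB2⟩ := (acycOr_iff hconv).1 hB
  obtain ⟨C, hC, hC2, hCmin⟩ := exists_least_noTwoCycleOn_sup_le (S := Subtype.val) .univ
    (fun H _ => hconv H) (fun H _ H' _ h => ⟨⟨_, hI _ H.2 _ H'.2 h⟩, by simp, rfl⟩)
    (fun H _ => hAor H) (fun H _ => hBor H) hA2 hB2
  have hCacyc : AcycOr 𝕀 C := (acycOr_iff hconv).2 ⟨fun H => (hC H (by simp)).1, hC2⟩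
  refine ⟨C, hCacyc, leP_of_le h𝕀 hA hCacyc fun H => (hC H (by simp)).2.1,
    leP_of_le h𝕀 hB hCacyc fun H => (hC H (by simp)).2.2, fun D hD hAD hBD => ?_⟩
  refine leP_of_le h𝕀 hCacyc hD fun H => hCmin D (fun H _ => ?_) ((acycOr_iff hconv).1 hD).2 H
    (by simp)
  exact ⟨hD.1 H, le_of_leP hAD H, le_of_leP hBD H⟩

open OrderDual in
theorem exists_meet (h𝕀 : IsIntervalHypergraph n 𝕀) (hI : ClosedUnderIntersection 𝕀)
    (hA : AcycOr 𝕀 A) (hB : AcycOr 𝕀 B) :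
    ∃ C, AcycOr 𝕀 C ∧ leP n 𝕀 C A ∧ leP n 𝕀 C B ∧
      ∀ D, AcycOr 𝕀 D → leP n 𝕀 D A → leP n 𝕀 D B → leP n 𝕀 D C := by
  have hconv := h𝕀.ordConnected
  obtain ⟨hAor, hA2⟩ := (acycOr_iff hconv).1 hA
  obtain ⟨hBor, hB2⟩ := (acycOr_iff hconv).1 hB
  obtain ⟨C, hC, hC2, hCmin⟩ := exists_least_noTwoCycleOn_sup_le (α := ℕᵒᵈ)
    (S := fun H : Edge 𝕀 => (H.1 : Finset ℕᵒᵈ)) .univ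
    (fun H _ => (hconv H).dual) (fun H _ H' _ h => ⟨⟨_, hI _ H.2 _ H'.2 h⟩, by simp, rfl⟩)
    (A := toDual ∘ A) (B := toDual ∘ B) (fun H _ => hAor H) (fun H _ => hBor H) hA2 hB2
  have hCacyc : AcycOr 𝕀 (ofDual ∘ C) :=
    (acycOr_iff hconv).2 ⟨fun H => (hC H (by simp)).1, hC2⟩
  refine ⟨ofDual ∘ C, hCacyc, leP_of_le h𝕀 hCacyc hA fun H => (hC H (by simp)).2.1,
    leP_of_le h𝕀 hCacyc hB fun H => (hC H (by simp)).2.2, fun D hD hDA hDB => ?_⟩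
  refine leP_of_le h𝕀 hD hCacyc fun H => hCmin (toDual ∘ D) (fun H _ => ?_)
    ((acycOr_iff hconv).1 hD).2 H (by simp)
  exact ⟨hD.1 H, le_of_leP hDA H, le_of_leP hDB H⟩

end Closed

section Crossing

variable {n : ℕ} {𝕀 : Finset (Finset ℕ)}

theorem exists_crossing (h𝕀 : IsIntervalHypergraph n 𝕀) (h : ¬ClosedUnderIntersection 𝕀) :
    ∃ a b c d, Finset.Icc a b ∈ 𝕀 ∧ Finset.Icc c d ∈ 𝕀 ∧ a < c ∧ c < b ∧ b < d ∧
      ∀ e, b ≤ e → e < d → Finset.Icc c e ∉ 𝕀 := by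
  classical
  suffices ∃ a b c d, Finset.Icc a b ∈ 𝕀 ∧ Finset.Icc c d ∈ 𝕀 ∧ a < c ∧ c < b ∧ b < d ∧
      Finset.Icc c b ∉ 𝕀 by
    obtain ⟨a, b, c, d, hI, hJ, hac, hcb, hbd, hcb'⟩ := this
    have hP : ∃ e, b ≤ e ∧ Finset.Icc c e ∈ 𝕀 := ⟨d, hbd.le, hJ⟩
    obtain ⟨hbe, he⟩ := Nat.find_spec hP
    exact ⟨a, b, c, Nat.find hP, hI, he, hac, hcb, hbe.lt_of_ne fun h => hcb' (h ▸ he),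
      fun e hbe hed he => Nat.find_min hP hed ⟨hbe, he⟩⟩
  simp only [ClosedUnderIntersection, not_forall, exists_prop] at h
  obtain ⟨I, hI, J, hJ, hne, hIJ⟩ := h
  obtain ⟨a, b, ha, -, hb, rfl⟩ := h𝕀.1 I hI
  obtain ⟨c, d, hc, -, hd, rfl⟩ := h𝕀.1 J hJ
  wlog hac : a ≤ c generalizing a b c d
  · exact this c d hc hd hJ a b ha hb hI (by rwa [Finset.inter_comm])
      (by rwa [Finset.inter_comm]) (by omega)
  have hinter : Finset.Icc a b ∩ Finset.Icc c d = Finset.Icc c (min b d) := by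
    ext x
    simp only [Finset.mem_inter, Finset.mem_Icc]
    omega
  rw [hinter] at hne hIJ
  obtain ⟨x, hx⟩ := hne
  rw [Finset.mem_Icc] at hx
  rcases le_or_gt d b with hdb | hbd
  · exact absurd hJ (by rwa [min_eq_right hdb] at hIJ)
  rw [min_eq_left hbd.le] at hIJ
  have hcb : c ≠ b := fun h => hIJ (by rw [h, Finset.Icc_self]; exact h𝕀.2 b (by omega) hb)
  have hac' : a ≠ c := fun h => hIJ (h ▸ hI)
  exact ⟨a, b, c, d, hI, hJ, by omega, by omega, hbd, hIJ⟩

noncomputable def minOrientation (𝕀 : Finset (Finset ℕ)) : Edge 𝕀 → ℕ :=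
  fun H => sInf (H.1 : Set ℕ)

def prioritize (p : ℕ) (O : Edge 𝕀 → ℕ) : Edge 𝕀 → ℕ :=
  fun H => if p ∈ H.1 then p else O H

noncomputable def prioritizeAbove (𝕀 : Finset (Finset ℕ)) (c b : ℕ) : Edge 𝕀 → ℕ :=
  fun H => if b ∈ H.1 ∧ ∀ y ∈ H.1, c ≤ y then b else minOrientation 𝕀 H

theorem minOrientation_le {H : Edge 𝕀} {x : ℕ} (hx : x ∈ H.1) : minOrientation 𝕀 H ≤ x :=
  Nat.sInf_le hx

theorem acycOr_minOrientation (h𝕀 : IsIntervalHypergraph n 𝕀) :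
    AcycOr 𝕀 (minOrientation 𝕀) :=
  (acycOr_iff h𝕀.ordConnected).2 ⟨fun H => Nat.sInf_mem (h𝕀.nonempty H),
    fun _ _ _ _ hPQ hQP => le_antisymm (minOrientation_le hQP) (minOrientation_le hPQ)⟩

theorem AcycOr.prioritize (h𝕀 : IsIntervalHypergraph n 𝕀) {O : Edge 𝕀 → ℕ} (hO : AcycOr 𝕀 O)
    (p : ℕ) : AcycOr 𝕀 (prioritize p O) := by
  obtain ⟨hOor, hO2⟩ := (acycOr_iff h𝕀.ordConnected).1 hO
  refine (acycOr_iff h𝕀.ordConnected).2 ⟨fun H => ?_, fun P hP Q hQ hPQ hQP => ?_⟩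
  · unfold IHL.prioritize
    split_ifs with h
    exacts [h, hOor H]
  · unfold IHL.prioritize at *
    by_cases hp : p ∈ P.1 <;> by_cases hq : p ∈ Q.1 <;>
      simp only [hp, hq, if_true, if_false] at hPQ hQP ⊢
    exact hO2 P hP Q hQ hPQ hQP

theorem acycOr_prioritizeAbove (h𝕀 : IsIntervalHypergraph n 𝕀) (c b : ℕ) :
    AcycOr 𝕀 (prioritizeAbove 𝕀 c b) := by
  obtain ⟨hmin, hmin2⟩ := (acycOr_iff h𝕀.ordConnected).1 (acycOr_minOrientation h𝕀)
  refine (acycOr_iff h𝕀.ordConnected).2 ⟨fun H => ?_, fun P hP Q hQ hPQ hQP => ?_⟩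
  · unfold prioritizeAbove
    split_ifs with h
    exacts [h.1, hmin H]
  unfold prioritizeAbove at *
  split_ifs at hPQ hQP ⊢ with hp hq hq
  · rfl
  · push Not at hq
    obtain ⟨y, hy, hyc⟩ := hq hPQ
    exact absurd ((hp.2 _ hQP).trans (minOrientation_le hy)) hyc.not_ge
  · push Not at hp
    obtain ⟨y, hy, hyc⟩ := hp hQP
    exact absurd ((hq.2 _ hPQ).trans (minOrientation_le hy)) hyc.not_ge
  · exact hmin2 P hP Q hQ hPQ hQP

theorem prioritize_minOrientation_le {O : Edge 𝕀 → ℕ} (hO : IsOrientation 𝕀 O) {p : ℕ}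
    (hp : ∀ H : Edge 𝕀, p ∈ H.1 → p ≤ O H) : prioritize p (minOrientation 𝕀) ≤ O := by
  intro H
  unfold prioritize
  split_ifs with h
  exacts [hp H h, minOrientation_le (hO H)]

theorem prioritizeAbove_le {O : Edge 𝕀 → ℕ} (hO : IsOrientation 𝕀 O) {c b : ℕ}
    (hb : ∀ H : Edge 𝕀, b ∈ H.1 → (∀ y ∈ H.1, c ≤ y) → b ≤ O H) : prioritizeAbove 𝕀 c b ≤ O := by
  intro H
  unfold prioritizeAbove
  split_ifs with h
  exacts [hb H h.1 h.2, minOrientation_le (hO H)]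

theorem prioritizeAbove_le_of_crossing (h𝕀 : IsIntervalHypergraph n 𝕀) {b c d : ℕ} (hbd : b < d)
    (hmin : ∀ e, b ≤ e → e < d → Finset.Icc c e ∉ 𝕀) :
    prioritizeAbove 𝕀 c b ≤ prioritize d (prioritize c (prioritize b (minOrientation 𝕀))) := by
  refine prioritizeAbove_le ((((acycOr_minOrientation h𝕀).prioritize h𝕀 b).prioritize h𝕀 c).prioritize
    h𝕀 d).1 fun H hbH hcH => ?_
  simp only [prioritize]
  split_ifs with hdH hcH' <;> try omega
  obtain ⟨s, e, -, -, -, hH⟩ := h𝕀.1 H.1 H.2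
  rw [hH, Finset.mem_Icc] at hbH hcH' hdH
  have hs := hcH s (by rw [hH, Finset.mem_Icc]; omega)
  exact (hmin e (by omega) (by omega) (by rw [show c = s by omega, ← hH]; exact H.2)).elim

theorem closedUnderIntersection_of_forall_join (h𝕀 : IsIntervalHypergraph n 𝕀)
    (hjoin : ∀ A B : Edge 𝕀 → ℕ, AcycOr 𝕀 A → AcycOr 𝕀 B →
      ∃ C, AcycOr 𝕀 C ∧ leP n 𝕀 A C ∧ leP n 𝕀 B C ∧
        ∀ D, AcycOr 𝕀 D → leP n 𝕀 A D → leP n 𝕀 B D → leP n 𝕀 C D) :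
    ClosedUnderIntersection 𝕀 := by
  by_contra hnc
  obtain ⟨a, b, c, d, hI, hJ, hac, hcb, hbd, hmin⟩ := exists_crossing h𝕀 hnc
  have hminOr := acycOr_minOrientation h𝕀
  set A := prioritizeAbove 𝕀 c b
  set B := prioritize c (minOrientation 𝕀)
  set D₁ := prioritize d (prioritize c (prioritize b (minOrientation 𝕀)))
  set D₂ := prioritize b B
  have hA : AcycOr 𝕀 A := acycOr_prioritizeAbove h𝕀 c b
  have hB : AcycOr 𝕀 B := hminOr.prioritize h𝕀 c
  have hD₁ : AcycOr 𝕀 D₁ := ((hminOr.prioritize h𝕀 b).prioritize h𝕀 c).prioritize h𝕀 d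
  have hD₂ : AcycOr 𝕀 D₂ := hB.prioritize h𝕀 b
  have hAD₁ : A ≤ D₁ := prioritizeAbove_le_of_crossing h𝕀 hbd hmin
  have hBD₁ : B ≤ D₁ := prioritize_minOrientation_le hD₁.1 fun H hcH => by
    simp only [D₁, prioritize, hcH, if_true]
    split_ifs <;> omega
  have hAD₂ : A ≤ D₂ := prioritizeAbove_le hD₂.1 fun H hbH _ => by simp [D₂, prioritize, hbH]
  have hBD₂ : B ≤ D₂ := prioritize_minOrientation_le hD₂.1 fun H hcH => by
    simp only [D₂, B, prioritize, hcH, if_true]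
    split_ifs <;> omega
  obtain ⟨C, hC, hAC, hBC, hCmin⟩ := hjoin A B hA hB
  have hCD₁ := le_of_leP (hCmin D₁ hD₁ (leP_of_le h𝕀 hA hD₁ hAD₁) (leP_of_le h𝕀 hB hD₁ hBD₁))
  have hCD₂ := le_of_leP (hCmin D₂ hD₂ (leP_of_le h𝕀 hA hD₂ hAD₂) (leP_of_le h𝕀 hB hD₂ hBD₂))
  set I : Edge 𝕀 := ⟨_, hI⟩
  set J : Edge 𝕀 := ⟨_, hJ⟩
  have hCI : C I = c := by
    refine le_antisymm ((hCD₁ I).trans_eq ?_) (le_of_eq_of_le ?_ (le_of_leP hBC I)) <;>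
      simp only [D₁, B, I, prioritize, Finset.mem_Icc] <;> split_ifs <;> omega
  have hCJ : C J = b := by
    refine le_antisymm ((hCD₂ J).trans_eq ?_) (le_of_eq_of_le ?_ (le_of_leP hAC J))
    · simp only [D₂, J, prioritize, Finset.mem_Icc]
      split_ifs <;> omega
    · exact (if_pos ⟨Finset.mem_Icc.2 ⟨hcb.le, hbd.le⟩, fun y hy => (Finset.mem_Icc.1 hy).1⟩).symm
  have hCIJ := ((acycOr_iff h𝕀.ordConnected).1 hC).2 I (by simp) J (by simp)
    (by simp only [hCI, J, Finset.mem_Icc]; omega) (by simp only [hCJ, I, Finset.mem_Icc]; omega)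
  omega

end Crossing

theorem stmt0_general (n : ℕ) (𝕀 : Finset (Finset ℕ))
    (h𝕀 : IsIntervalHypergraph n 𝕀) :
    (∀ A B : Edge 𝕀 → ℕ, AcycOr 𝕀 A → AcycOr 𝕀 B →
      (∃ C, AcycOr 𝕀 C ∧ leP n 𝕀 A C ∧ leP n 𝕀 B C ∧
        ∀ D, AcycOr 𝕀 D → leP n 𝕀 A D → leP n 𝕀 B D → leP n 𝕀 C D) ∧
      (∃ C, AcycOr 𝕀 C ∧ leP n 𝕀 C A ∧ leP n 𝕀 C B ∧
        ∀ D, AcycOr 𝕀 D → leP n 𝕀 D A → leP n 𝕀 D B → leP n 𝕀 D C)) ↔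
    ClosedUnderIntersection 𝕀 :=
  ⟨fun h => closedUnderIntersection_of_forall_join h𝕀 fun A B hA hB => (h A B hA hB).1,
    fun hI _ _ hA hB => ⟨exists_join h𝕀 hI hA hB, exists_meet h𝕀 hI hA hB⟩⟩

/-- For an interval hypergraph `𝕀` on `[n]`, the hypergraphic poset
`P_𝕀` is a lattice (every pair of acyclic orientations admits a least upper bound and
a greatest lower bound) if and only if `𝕀` is closed under intersection. -/
theorem stmt0 (n : ℕ) (hn : 1 ≤ n) (𝕀 : Finset (Finset ℕ))
    (h𝕀 : IsIntervalHypergraph n 𝕀) :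
    (∀ A B : Edge 𝕀 → ℕ, AcycOr 𝕀 A → AcycOr 𝕀 B →
      (∃ C, AcycOr 𝕀 C ∧ leP n 𝕀 A C ∧ leP n 𝕀 B C ∧
        ∀ D, AcycOr 𝕀 D → leP n 𝕀 A D → leP n 𝕀 B D → leP n 𝕀 C D) ∧
      (∃ C, AcycOr 𝕀 C ∧ leP n 𝕀 C A ∧ leP n 𝕀 C B ∧
        ∀ D, AcycOr 𝕀 D → leP n 𝕀 D A → leP n 𝕀 D B → leP n 𝕀 D C)) ↔
    ClosedUnderIntersection 𝕀 :=
  stmt0_general n 𝕀 h𝕀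

end IHL
end

section
/- For an interval hypergraph 𝕀 on [n], the map π ↦ Or_π is a meet semilattice morphism from the weak order on permutations of [n] to the hypergraphic poset P_𝕀 — that is, for all permutations σ, τ and every permutation ρ that is a greatest lower bound of σ and τ in the weak order, the orientation Or_ρ is a greatest lower bound of Or_σ and Or_τ in P_𝕀 — if and only if 𝕀 is closed under initial subintervals, i.e., [i,k] ∈ 𝕀 implies [i,j] ∈ 𝕀 for all 1 ≤ i < j < k ≤ n. -/
namespace IHL

/-!
`Or` is monotone from the weak order to `P_𝕀`: swapping two adjacent entries `a < b` of `ρ` adds the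
single inversion `(a, b)` and changes `Or_ρ` either not at all or by the increasing flip `a → b`.

If `𝕀` is closed under initial subintervals, every acyclic orientation `C` below `Or_σ` and `Or_τ`
is `Or_π` for some `π` below both `σ` and `τ`, hence below their meet `ρ`, so that `C ≤ Or_ρ`.
For `π` take the linear extension of `C` that always lists the smallest element without a
`C`-predecessor among those not yet listed. If it lists `y` before some `x < y`, there is a chain
`x < c₁ < ⋯ ≤ y` in which each `cₖ` is the value of `C` on a hyperedge `[u, v]` containing its
predecessor; closure puts `[u, cₖ]` in `𝕀`, where `C`, and hence `Or_σ ≥ C`, picks the maximum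
`cₖ`, so `σ` also lists `cₖ` before its predecessor.

Conversely, a minimal failure `[i, j + 1] ∈ 𝕀`, `[i, j] ∉ 𝕀` of closure yields permutations whose
meet is not sent to the meet of their images.
-/

open Finset Relation

section

variable {n : ℕ} {𝕀 : Finset (Finset ℕ)}

namespace IsIntervalHypergraph

theorem nonempty_s3 (h𝕀 : IsIntervalHypergraph n 𝕀) (H : Edge 𝕀) : H.1.Nonempty := by
  obtain ⟨a, b, -, hab, -, hH⟩ := h𝕀.1 H.1 H.2
  exact ⟨a, by simp [hH, hab]⟩

theorem subset_Icc_s3 (h𝕀 : IsIntervalHypergraph n 𝕀) (H : Edge 𝕀) : H.1 ⊆ Icc 1 n := by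
  obtain ⟨a, b, ha, -, hb, hH⟩ := h𝕀.1 H.1 H.2
  exact hH ▸ Icc_subset_Icc ha hb

theorem mem_of_le_of_le (h𝕀 : IsIntervalHypergraph n 𝕀) (H : Edge 𝕀) {x y z : ℕ} (hx : x ∈ H.1)
    (hy : y ∈ H.1) (hxz : x ≤ z) (hzy : z ≤ y) : z ∈ H.1 := by
  obtain ⟨a, b, -, -, -, hH⟩ := h𝕀.1 H.1 H.2
  rw [hH, mem_Icc] at hx hy ⊢
  omega

end IsIntervalHypergraph

section orMap

variable {π : Equiv.Perm ℕ} {H : Edge 𝕀}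

theorem orMap_mem (hH : H.1.Nonempty) : orMap 𝕀 π H ∈ H.1 := by
  obtain ⟨y, hy⟩ := hH
  exact Nat.sInf_mem (s := {p | π p ∈ H.1}) ⟨π.symm y, by simpa using hy⟩

theorem symm_orMap_le {x : ℕ} (hx : x ∈ H.1) : π.symm (orMap 𝕀 π H) ≤ π.symm x := by
  simpa [orMap] using Nat.sInf_le (s := {p | π p ∈ H.1}) (by simpa using hx)

theorem orMap_eq_of_forall_le {y : ℕ} (hy : y ∈ H.1) (hfirst : ∀ x ∈ H.1, π.symm y ≤ π.symm x) :
    orMap 𝕀 π H = y :=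
  π.symm.injective <| (symm_orMap_le hy).antisymm (hfirst _ (orMap_mem ⟨y, hy⟩))

end orMap

def precStep (𝕀 : Finset (Finset ℕ)) (A : Edge 𝕀 → ℕ) (a b : ℕ) : Prop :=
  ∃ H : Edge 𝕀, A H = a ∧ b ∈ H.1 ∧ b ≠ a

theorem _root_.Relation.TransGen.exists_seq {α : Type*} {r : α → α → Prop} {a b : α}
    (h : TransGen r a b) :
    ∃ k, 0 < k ∧ ∃ f : ℕ → α, f 0 = a ∧ f k = b ∧ ∀ p < k, r (f p) (f (p + 1)) := by
  induction h using TransGen.head_induction_on with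
  | @single x hxb => exact ⟨1, one_pos, fun p => if p = 0 then x else b, by simp, by simp, by simpa⟩
  | @head a c hac _ ih =>
    obtain ⟨k, -, f, hf0, hfk, hf⟩ := ih
    refine ⟨k + 1, k.succ_pos, fun p => if p = 0 then a else f (p - 1), by simp, by simpa, ?_⟩
    rintro (_ | p) hp
    · simpa [hf0]
    · simpa using hf p (by omega)

theorem isAcyclic_iff_forall_not_prec {A : Edge 𝕀 → ℕ} :
    IsAcyclic 𝕀 A ↔ ∀ a, ¬ prec 𝕀 A a a := by
  constructor
  · rintro hA a ha
    obtain ⟨k, hk, f, hf0, hfk, hf⟩ := ha.exists_seq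
    have : ∀ p, ∃ E : Edge 𝕀, p < k → A E = f p ∧ f (p + 1) ∈ E.1 ∧ f (p + 1) ≠ f p := by
      intro p
      by_cases hp : p < k
      · obtain ⟨E, hE⟩ := hf p hp
        exact ⟨E, fun _ => hE⟩
      · obtain ⟨E, -⟩ := hf 0 hk
        exact ⟨E, fun h => absurd h hp⟩
    choose E hE using this
    have hk1 : k ≠ 1 := by
      rintro rfl
      exact (hE 0 hk).2.2 (by rw [zero_add, hfk, hf0])
    refine hA ⟨k, fun p => E (p % k), by omega, by simp, fun p hp => ?_⟩
    have hval : A (E ((p + 1) % k)) = f (p + 1) := by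
      rcases (Nat.lt_or_ge (p + 1) k) with h | h
      · rw [Nat.mod_eq_of_lt h, (hE _ h).1]
      · rw [show p + 1 = k by omega, Nat.mod_self, (hE 0 hk).1, hf0, hfk]
    simp only [Nat.mod_eq_of_lt hp, hval, (hE p hp).1]
    exact (hE p hp).2
  · rintro hA ⟨k, H, hk, hHk, hH⟩
    apply hA (A (H 0))
    have : TransGen (fun p q => precStep 𝕀 A (A (H p)) (A (H q))) 0 k :=
      transGen_of_succ_of_lt _ (fun p hp => ⟨H p, rfl, hH p (Set.mem_Ico.1 hp).2⟩) (by omega)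
    have hcycle : prec 𝕀 A (A (H 0)) (A (H k)) := this.lift (fun p => A (H p)) fun _ _ h => h
    rwa [hHk] at hcycle

theorem isAcyclic_orMap (π : Equiv.Perm ℕ) : IsAcyclic 𝕀 (orMap 𝕀 π) := by
  refine isAcyclic_iff_forall_not_prec.2 fun a ha => lt_irrefl (π.symm a) ?_
  have := ha.lift' π.symm fun x y ⟨H, hHx, hyH, hyx⟩ => TransGen.single <|
    hHx ▸ (symm_orMap_le hyH).lt_of_ne fun h => hyx (hHx ▸ π.symm.injective h).symm
  rwa [transGen_eq_self] at this

theorem acycOr_orMap (h𝕀 : IsIntervalHypergraph n 𝕀) (π : Equiv.Perm ℕ) :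
    AcycOr 𝕀 (orMap 𝕀 π) :=
  ⟨fun H => orMap_mem (h𝕀.nonempty_s3 H), isAcyclic_orMap π⟩

theorem IsAcyclic.apply_eq_of_subset {A : Edge 𝕀 → ℕ} (hA : IsAcyclic 𝕀 A) {K H : Edge 𝕀}
    (hKH : K.1 ⊆ H.1) (hAH : A H ∈ K.1) (hAK : A K ∈ K.1) : A K = A H := by
  by_contra hne
  refine isAcyclic_iff_forall_not_prec.1 hA (A H)
    (TransGen.head (b := A K) ?_ (TransGen.single ?_))
  exacts [⟨H, rfl, hKH hAK, hne⟩, ⟨K, rfl, hAH, Ne.symm hne⟩]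

theorem apply_le_of_leP {A B : Edge 𝕀 → ℕ} (h : leP n 𝕀 A B) (H : Edge 𝕀) : A H ≤ B H := by
  induction h with
  | refl => rfl
  | @tail B C _ hstep ih =>
    obtain ⟨-, -, i, j, -, -, hij, -, hflip⟩ := hstep
    refine ih.trans ?_
    by_cases he : B H = C H
    · exact he.le
    · have := (hflip H).1 he
      omega

namespace IsPermOn

variable {π : Equiv.Perm ℕ}

theorem symm (hπ : IsPermOn n π) : IsPermOn n π.symm := fun x hx =>
  π.symm_apply_eq.2 (hπ x hx).symm

theorem apply_mem_iff (hπ : IsPermOn n π) {x : ℕ} : π x ∈ Icc 1 n ↔ x ∈ Icc 1 n := by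
  refine ⟨fun h => ?_, fun h => ?_⟩ <;> by_contra hc
  · exact hc (hπ x hc ▸ h)
  · rw [π.injective (hπ _ hc)] at hc
    exact hc h

theorem swap_trans (hπ : IsPermOn n π) {q : ℕ} (hq : 1 ≤ q) (hqn : q + 1 ≤ n) :
    IsPermOn n ((Equiv.swap q (q + 1)).trans π) := fun x hx => by
  rw [mem_Icc] at hx
  rw [Equiv.trans_apply, Equiv.swap_apply_of_ne_of_ne (by omega) (by omega)]
  exact hπ x (by rwa [mem_Icc])

end IsPermOn

theorem _root_.Equiv.Perm.eq_one_of_strictMono {g : Equiv.Perm ℕ} (hg : StrictMono g) :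
    g = 1 := by
  ext x
  exact DFunLike.congr_fun (Subsingleton.elim (hg.orderIsoOfSurjective g g.surjective)
    (OrderIso.refl ℕ)) x

theorem swap_succ_lt_swap_succ_iff {q u v : ℕ} (h₁ : ¬(u = q ∧ v = q + 1))
    (h₂ : ¬(u = q + 1 ∧ v = q)) : Equiv.swap q (q + 1) u < Equiv.swap q (q + 1) v ↔ u < v := by
  simp only [Equiv.swap_apply_def]
  split_ifs <;> omega

noncomputable def inversions (n : ℕ) (π : Equiv.Perm ℕ) : Finset (ℕ × ℕ) :=
  (Icc 1 n ×ˢ Icc 1 n).filter fun ab => ab.1 < ab.2 ∧ π.symm ab.2 < π.symm ab.1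

theorem mem_inversions {π : Equiv.Perm ℕ} {a b : ℕ} :
    (a, b) ∈ inversions n π ↔ 1 ≤ a ∧ a < b ∧ b ≤ n ∧ π.symm b < π.symm a := by
  simp only [inversions, mem_filter, mem_product, mem_Icc]
  omega

theorem weakLe_iff_inversions_subset {ρ σ : Equiv.Perm ℕ} :
    weakLe n ρ σ ↔ inversions n ρ ⊆ inversions n σ := by
  refine ⟨fun h ⟨a, b⟩ hab => ?_, fun h a b ha hab hb hinv => ?_⟩
  · obtain ⟨ha, hab, hb, hinv⟩ := mem_inversions.1 hab
    exact mem_inversions.2 ⟨ha, hab, hb, h a b ha hab hb hinv⟩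
  · exact (mem_inversions.1 (h (mem_inversions.2 ⟨ha, hab, hb, hinv⟩))).2.2.2

section AdjacentSwap

variable {ρ : Equiv.Perm ℕ} {q : ℕ}

theorem swap_trans_symm_apply (x : ℕ) :
    ((Equiv.swap q (q + 1)).trans ρ).symm x = Equiv.swap q (q + 1) (ρ.symm x) := by
  simp

theorem inversions_swap_trans (hρ : IsPermOn n ρ) (hq : 1 ≤ q) (hqn : q + 1 ≤ n)
    (hlt : ρ q < ρ (q + 1)) :
    inversions n ((Equiv.swap q (q + 1)).trans ρ) = insert (ρ q, ρ (q + 1)) (inversions n ρ) := by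
  ext ⟨x, y⟩
  simp only [mem_insert, mem_inversions, Prod.mk.injEq, swap_trans_symm_apply]
  by_cases hxy : x = ρ q ∧ y = ρ (q + 1)
  · obtain ⟨rfl, rfl⟩ := hxy
    have h₁ := hρ.apply_mem_iff.2 (mem_Icc.2 ⟨hq, (by omega : q ≤ n)⟩)
    have h₂ := hρ.apply_mem_iff.2 (mem_Icc.2 ⟨(by omega : 1 ≤ q + 1), hqn⟩)
    simp only [mem_Icc, Equiv.symm_apply_apply, Equiv.swap_apply_left,
      Equiv.swap_apply_right] at h₁ h₂ ⊢
    exact iff_of_true ⟨h₁.1, hlt, h₂.2, q.lt_succ_self⟩ (by simp)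
  · have key (h : x < y) : Equiv.swap q (q + 1) (ρ.symm y) < Equiv.swap q (q + 1) (ρ.symm x) ↔
        ρ.symm y < ρ.symm x := by
      apply swap_succ_lt_swap_succ_iff <;> rintro ⟨h₁, h₂⟩ <;>
        rw [Equiv.symm_apply_eq] at h₁ h₂ <;> subst h₁ h₂
      · omega
      · exact hxy ⟨rfl, rfl⟩
    simp only [hxy, false_or]
    exact and_congr_right fun _ => and_congr_right fun h => and_congr_right fun _ => key h

theorem orMap_swap_trans {H : Edge 𝕀} (hH : H.1.Nonempty) :
    orMap 𝕀 ((Equiv.swap q (q + 1)).trans ρ) H =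
      if ρ (q + 1) ∈ H.1 ∧ orMap 𝕀 ρ H = ρ q then ρ (q + 1) else orMap 𝕀 ρ H := by
  split_ifs with hc
  · refine orMap_eq_of_forall_le hc.1 fun x hx => ?_
    have hfirst := symm_orMap_le (π := ρ) hx
    rw [hc.2, ρ.symm_apply_apply] at hfirst
    rw [swap_trans_symm_apply, swap_trans_symm_apply, ρ.symm_apply_apply,
      Equiv.swap_apply_right, Equiv.swap_apply_def]
    split_ifs <;> omega
  · refine orMap_eq_of_forall_le (orMap_mem hH) fun x hx => ?_
    have hfirst := symm_orMap_le (π := ρ) hx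
    rw [swap_trans_symm_apply, swap_trans_symm_apply, ← not_lt,
      swap_succ_lt_swap_succ_iff (by omega)]
    · omega
    · rintro ⟨h₁, h₂⟩
      rw [Equiv.symm_apply_eq] at h₁ h₂
      exact hc ⟨h₁ ▸ hx, h₂⟩

theorem leP_orMap_swap_trans (h𝕀 : IsIntervalHypergraph n 𝕀) (hρ : IsPermOn n ρ) (hq : 1 ≤ q)
    (hqn : q + 1 ≤ n) (hlt : ρ q < ρ (q + 1)) :
    leP n 𝕀 (orMap 𝕀 ρ) (orMap 𝕀 ((Equiv.swap q (q + 1)).trans ρ)) := by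
  by_cases heq : orMap 𝕀 ρ = orMap 𝕀 ((Equiv.swap q (q + 1)).trans ρ)
  · rw [heq]
    exact ReflTransGen.refl
  have h₁ := mem_Icc.1 (hρ.apply_mem_iff.2 (mem_Icc.2 ⟨hq, (by omega : q ≤ n)⟩))
  have h₂ := mem_Icc.1 (hρ.apply_mem_iff.2 (mem_Icc.2 ⟨(by omega : 1 ≤ q + 1), hqn⟩))
  refine ReflTransGen.single ⟨acycOr_orMap h𝕀 _, acycOr_orMap h𝕀 _, ρ q, ρ (q + 1), heq, h₁.1,
    hlt, h₂.2, fun H => ?_⟩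
  rw [orMap_swap_trans (h𝕀.nonempty_s3 H)]
  split_ifs with hc
  · exact ⟨fun _ => ⟨hc.2, rfl⟩, fun _ _ => iff_of_true hc.2 rfl⟩
  · refine ⟨fun h => (h rfl).elim, fun ha hb => ⟨fun h => (hc ⟨hb, h⟩).elim, fun h => ?_⟩⟩
    have hfirst := symm_orMap_le (π := ρ) ha
    rw [h, ρ.symm_apply_apply, ρ.symm_apply_apply] at hfirst
    omega

theorem exists_adjacent_inversion {σ : Equiv.Perm ℕ} (hρ : IsPermOn n ρ) (hσ : IsPermOn n σ)
    (h : weakLe n ρ σ) (hne : ρ ≠ σ) :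
    ∃ q, 1 ≤ q ∧ q + 1 ≤ n ∧ ρ q < ρ (q + 1) ∧ σ.symm (ρ (q + 1)) < σ.symm (ρ q) := by
  by_contra! hmono
  refine hne (inv_mul_eq_one.1 (Equiv.Perm.eq_one_of_strictMono ?_)).symm
  have hg (x : ℕ) : (σ⁻¹ * ρ) x = σ.symm (ρ x) := rfl
  have hmem (x : ℕ) : σ.symm (ρ x) ∈ Icc 1 n ↔ x ∈ Icc 1 n :=
    hσ.symm.apply_mem_iff.trans hρ.apply_mem_iff
  have hout (x : ℕ) (hx : x ∉ Icc 1 n) : σ.symm (ρ x) = x := by rw [hρ x hx, hσ.symm x hx]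
  refine strictMono_nat_of_lt_succ fun p => ?_
  rw [hg, hg]
  by_cases hp : 1 ≤ p ∧ p + 1 ≤ n
  · have ha := mem_Icc.1 (hρ.apply_mem_iff.2 (mem_Icc.2 ⟨hp.1, (by omega : p ≤ n)⟩))
    have hb := mem_Icc.1 (hρ.apply_mem_iff.2 (mem_Icc.2 ⟨(by omega : 1 ≤ p + 1), hp.2⟩))
    rcases lt_or_gt_of_ne (ρ.injective.ne p.succ_ne_self.symm) with hlt | hgt
    · exact (hmono p hp.1 hp.2 hlt).lt_of_ne
        (σ.symm.injective.ne (ρ.injective.ne p.succ_ne_self.symm))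
    · exact h _ _ hb.1 hgt ha.2 (by simp)
  · by_cases hp1 : p + 1 ∈ Icc 1 n
    · have hp0 : p ∉ Icc 1 n := by simp only [mem_Icc] at hp1 ⊢; omega
      have := (hmem (p + 1)).2 hp1
      rw [hout p hp0]
      simp only [mem_Icc] at hp1 hp0 this
      omega
    · rw [hout (p + 1) hp1]
      by_cases hpn : p ∈ Icc 1 n
      · have := (hmem p).2 hpn
        simp only [mem_Icc] at hp1 hpn this
        omega
      · rw [hout p hpn]
        omega

theorem leP_orMap_of_weakLe (h𝕀 : IsIntervalHypergraph n 𝕀) {ρ σ : Equiv.Perm ℕ}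
    (hρ : IsPermOn n ρ) (hσ : IsPermOn n σ) (h : weakLe n ρ σ) :
    leP n 𝕀 (orMap 𝕀 ρ) (orMap 𝕀 σ) := by
  by_cases hne : ρ = σ
  · rw [hne]
    exact ReflTransGen.refl
  obtain ⟨q, hq, hqn, hlt, hσinv⟩ := exists_adjacent_inversion hρ hσ h hne
  have hinv := inversions_swap_trans hρ hq hqn hlt
  have hnew : (ρ q, ρ (q + 1)) ∉ inversions n ρ := by simp [mem_inversions]
  have h₁ := mem_Icc.1 (hρ.apply_mem_iff.2 (mem_Icc.2 ⟨hq, (by omega : q ≤ n)⟩))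
  have h₂ := mem_Icc.1 (hρ.apply_mem_iff.2 (mem_Icc.2 ⟨(by omega : 1 ≤ q + 1), hqn⟩))
  have h' : weakLe n ((Equiv.swap q (q + 1)).trans ρ) σ := by
    rw [weakLe_iff_inversions_subset, hinv]
    exact insert_subset (mem_inversions.2 ⟨h₁.1, hlt, h₂.2, hσinv⟩)
      (weakLe_iff_inversions_subset.1 h)
  have hcard : (inversions n ((Equiv.swap q (q + 1)).trans ρ)).card =
      (inversions n ρ).card + 1 := by
    rw [hinv, card_insert_of_notMem hnew]
  have := card_le_card (weakLe_iff_inversions_subset.1 h')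
  exact ReflTransGen.trans (leP_orMap_swap_trans h𝕀 hρ hq hqn hlt)
    (leP_orMap_of_weakLe h𝕀 (hρ.swap_trans hq hqn) hσ h')
termination_by (inversions n σ).card - (inversions n ρ).card

end AdjacentSwap

def IsClosedUnderInitialSubintervals (n : ℕ) (𝕀 : Finset (Finset ℕ)) : Prop :=
  ∀ i j k, 1 ≤ i → i < j → j < k → k ≤ n → Icc i k ∈ 𝕀 → Icc i j ∈ 𝕀

def OrMapPreservesMeets (n : ℕ) (𝕀 : Finset (Finset ℕ)) : Prop :=
  ∀ σ τ ρ : Equiv.Perm ℕ, IsPermOn n σ → IsPermOn n τ → IsPermOn n ρ →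
    (weakLe n ρ σ ∧ weakLe n ρ τ ∧
      ∀ ρ', IsPermOn n ρ' → weakLe n ρ' σ → weakLe n ρ' τ → weakLe n ρ' ρ) →
    (leP n 𝕀 (orMap 𝕀 ρ) (orMap 𝕀 σ) ∧ leP n 𝕀 (orMap 𝕀 ρ) (orMap 𝕀 τ) ∧
      ∀ C, AcycOr 𝕀 C → leP n 𝕀 C (orMap 𝕀 σ) → leP n 𝕀 C (orMap 𝕀 τ) →
        leP n 𝕀 C (orMap 𝕀 ρ))

section Witnesses

/- In one-line notation, agreeing with the identity outside the positions `i, …, j + 1`: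
`sigmaPerm i j = (j, i, i+1, …, j-1, j+1)`, `tauPerm i j = (j+1, i, j, i+1, …, j-1)` and their meet
`rhoPerm i j = (i, j, i+1, …, j-1, j+1)`. When `[i, j] ∉ 𝕀`, `Or` of the first two differ by the
flip `j → j + 1`, while `Or_σ` and `Or_ρ` disagree on `[i, j + 1]`. -/

def sigmaPerm (i j : ℕ) : Equiv.Perm ℕ where
  toFun p := if p < i ∨ j < p then p else if p = i then j else p - 1
  invFun v := if v < i ∨ j < v then v else if v = j then i else v + 1
  left_inv p := by dsimp only; split_ifs <;> omega
  right_inv v := by dsimp only; split_ifs <;> omega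

def tauPerm (i j : ℕ) : Equiv.Perm ℕ where
  toFun p := if p < i ∨ j + 1 < p then p
    else if p = i then j + 1 else if p = i + 1 then i else if p = i + 2 then j else p - 2
  invFun v := if v < i ∨ j + 1 < v then v
    else if v = j + 1 then i else if v = i then i + 1 else if v = j then i + 2 else v + 2
  left_inv p := by dsimp only; split_ifs <;> omega
  right_inv v := by dsimp only; split_ifs <;> omega

def rhoPerm (i j : ℕ) : Equiv.Perm ℕ where
  toFun p := if p ≤ i ∨ j < p then p else if p = i + 1 then j else p - 1
  invFun v := if v ≤ i ∨ j < v then v else if v = j then i + 1 else v + 1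
  left_inv p := by dsimp only; split_ifs <;> omega
  right_inv v := by dsimp only; split_ifs <;> omega

variable {i j : ℕ}

theorem sigmaPerm_symm_apply (v : ℕ) : (sigmaPerm i j).symm v =
    if v < i ∨ j < v then v else if v = j then i else v + 1 := rfl

theorem tauPerm_symm_apply (v : ℕ) : (tauPerm i j).symm v = if v < i ∨ j + 1 < v then v
    else if v = j + 1 then i else if v = i then i + 1 else if v = j then i + 2 else v + 2 := rfl

theorem rhoPerm_symm_apply (v : ℕ) : (rhoPerm i j).symm v =
    if v ≤ i ∨ j < v then v else if v = j then i + 1 else v + 1 := rfl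

theorem isPermOn_sigmaPerm (hi : 1 ≤ i) (hjn : j + 1 ≤ n) : IsPermOn n (sigmaPerm i j) :=
  fun x hx => by
    simp only [mem_Icc, not_and_or, not_le] at hx
    show ite _ _ _ = x
    split_ifs <;> omega

theorem isPermOn_tauPerm (hi : 1 ≤ i) (hjn : j + 1 ≤ n) : IsPermOn n (tauPerm i j) :=
  fun x hx => by
    simp only [mem_Icc, not_and_or, not_le] at hx
    show ite _ _ _ = x
    split_ifs <;> omega

theorem isPermOn_rhoPerm (hi : 1 ≤ i) (hjn : j + 1 ≤ n) : IsPermOn n (rhoPerm i j) :=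
  fun x hx => by
    simp only [mem_Icc, not_and_or, not_le] at hx
    show ite _ _ _ = x
    split_ifs <;> omega

theorem weakLe_rhoPerm_sigmaPerm : weakLe n (rhoPerm i j) (sigmaPerm i j) := by
  intro a b _ hab _
  simp only [rhoPerm_symm_apply, sigmaPerm_symm_apply]
  split_ifs <;> omega

theorem weakLe_rhoPerm_tauPerm : weakLe n (rhoPerm i j) (tauPerm i j) := by
  intro a b _ hab _
  simp only [rhoPerm_symm_apply, tauPerm_symm_apply]
  split_ifs <;> omega

theorem weakLe_rhoPerm_of_weakLe {π : Equiv.Perm ℕ} (hσ : weakLe n π (sigmaPerm i j))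
    (hτ : weakLe n π (tauPerm i j)) : weakLe n π (rhoPerm i j) := by
  intro a b ha hab hb hinv
  have hσ := hσ a b ha hab hb hinv
  have hτ := hτ a b ha hab hb hinv
  rw [sigmaPerm_symm_apply, sigmaPerm_symm_apply] at hσ
  rw [tauPerm_symm_apply, tauPerm_symm_apply] at hτ
  obtain ⟨rfl, hia⟩ : b = j ∧ i ≤ a := by split_ifs at hσ <;> omega
  have hia : i < a := by split_ifs at hτ <;> omega
  rw [rhoPerm_symm_apply, rhoPerm_symm_apply]
  split_ifs <;> omega

theorem exists_Icc_succ_mem_of_not_isClosed (h : ¬ IsClosedUnderInitialSubintervals n 𝕀) :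
    ∃ i j, 1 ≤ i ∧ i < j ∧ j + 1 ≤ n ∧ Icc i (j + 1) ∈ 𝕀 ∧ Icc i j ∉ 𝕀 := by
  simp only [IsClosedUnderInitialSubintervals, not_forall] at h
  obtain ⟨i, j, k, hi, hij, hjk, hkn, hk, hj⟩ := h
  suffices ∀ k, j + 1 ≤ k → Icc i k ∈ 𝕀 →
      ∃ m, j ≤ m ∧ m + 1 ≤ k ∧ Icc i (m + 1) ∈ 𝕀 ∧ Icc i m ∉ 𝕀 by
    obtain ⟨m, hjm, hmk, hm, hm'⟩ := this k hjk hk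
    exact ⟨i, m, hi, by omega, by omega, hm, hm'⟩
  intro k hk
  induction k, hk using Nat.le_induction with
  | base => exact fun h => ⟨j, le_rfl, le_rfl, h, hj⟩
  | succ k hk ih =>
    intro hk1
    by_cases hk' : Icc i k ∈ 𝕀
    · obtain ⟨m, hjm, hmk, hm⟩ := ih hk'
      exact ⟨m, hjm, by omega, hm⟩
    · exact ⟨k, by omega, le_rfl, hk1, hk'⟩

theorem orMap_eq_of_eq_Icc {π : Equiv.Perm ℕ} {H : Edge 𝕀} {a b y : ℕ} (hH : H.1 = Icc a b)
    (hy : a ≤ y ∧ y ≤ b) (hfirst : ∀ x, a ≤ x → x ≤ b → π.symm y ≤ π.symm x) :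
    orMap 𝕀 π H = y :=
  orMap_eq_of_forall_le (by rw [hH, mem_Icc]; exact hy) fun x hx => by
    rw [hH, mem_Icc] at hx
    exact hfirst x hx.1 hx.2

theorem orMap_sigmaPerm {H : Edge 𝕀} {a b : ℕ} (hH : H.1 = Icc a b) (hab : a ≤ b) :
    orMap 𝕀 (sigmaPerm i j) H = if i ≤ a ∧ a ≤ j ∧ j ≤ b then j else a := by
  split_ifs <;> refine orMap_eq_of_eq_Icc hH (by omega) fun x _ _ => ?_ <;>
    simp only [sigmaPerm_symm_apply] <;> split_ifs <;> omega

theorem orMap_tauPerm {H : Edge 𝕀} {a b : ℕ} (hH : H.1 = Icc a b) (hab : a ≤ b)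
    (hne : ¬(a = i ∧ b = j)) :
    orMap 𝕀 (tauPerm i j) H = if i ≤ a ∧ a ≤ j + 1 ∧ j + 1 ≤ b then j + 1
      else if i ≤ a ∧ a ≤ j ∧ j ≤ b then j else a := by
  split_ifs <;> refine orMap_eq_of_eq_Icc hH (by omega) fun x _ _ => ?_ <;>
    simp only [tauPerm_symm_apply] <;> split_ifs <;> omega

theorem orMap_rhoPerm {H : Edge 𝕀} (hH : H.1 = Icc i (j + 1)) (hij : i < j) :
    orMap 𝕀 (rhoPerm i j) H = i :=
  orMap_eq_of_eq_Icc hH (by omega) fun x _ _ => by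
    simp only [rhoPerm_symm_apply]
    split_ifs <;> omega

theorem flipStep_sigmaPerm_tauPerm (h𝕀 : IsIntervalHypergraph n 𝕀) (hi : 1 ≤ i) (hij : i < j)
    (hjn : j + 1 ≤ n) (hE : Icc i (j + 1) ∈ 𝕀) (hnot : Icc i j ∉ 𝕀) :
    FlipStep n 𝕀 (orMap 𝕀 (sigmaPerm i j)) (orMap 𝕀 (tauPerm i j)) := by
  have hform (H : Edge 𝕀) : ∃ a b, a ≤ b ∧ H.1 = Icc a b ∧
      orMap 𝕀 (sigmaPerm i j) H = (if i ≤ a ∧ a ≤ j ∧ j ≤ b then j else a) ∧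
      orMap 𝕀 (tauPerm i j) H = if i ≤ a ∧ a ≤ j + 1 ∧ j + 1 ≤ b then j + 1
        else if i ≤ a ∧ a ≤ j ∧ j ≤ b then j else a := by
    obtain ⟨a, b, -, hab, -, hH⟩ := h𝕀.1 H.1 H.2
    refine ⟨a, b, hab, hH, orMap_sigmaPerm hH hab, orMap_tauPerm hH hab ?_⟩
    rintro ⟨rfl, rfl⟩
    exact hnot (hH ▸ H.2)
  refine ⟨acycOr_orMap h𝕀 _, acycOr_orMap h𝕀 _, j, j + 1, fun heq => ?_, by omega, by omega, hjn,
    fun H => ?_⟩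
  · have := congrFun heq ⟨_, hE⟩
    rw [orMap_sigmaPerm rfl (by omega), orMap_tauPerm rfl (by omega) (by omega)] at this
    split_ifs at this <;> omega
  · obtain ⟨a, b, hab, hH, hσ, hτ⟩ := hform H
    rw [hH, mem_Icc, mem_Icc, hσ, hτ]
    split_ifs <;> omega

theorem isClosed_of_orMapPreservesMeets (h𝕀 : IsIntervalHypergraph n 𝕀)
    (h : OrMapPreservesMeets n 𝕀) : IsClosedUnderInitialSubintervals n 𝕀 := by
  by_contra hcl
  obtain ⟨i, j, hi, hij, hjn, hE, hnot⟩ := exists_Icc_succ_mem_of_not_isClosed hcl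
  obtain ⟨-, -, hglb⟩ := h (sigmaPerm i j) (tauPerm i j) (rhoPerm i j)
    (isPermOn_sigmaPerm hi hjn) (isPermOn_tauPerm hi hjn) (isPermOn_rhoPerm hi hjn)
    ⟨weakLe_rhoPerm_sigmaPerm, weakLe_rhoPerm_tauPerm, fun _ _ => weakLe_rhoPerm_of_weakLe⟩
  have hle := apply_le_of_leP (hglb _ (acycOr_orMap h𝕀 _) ReflTransGen.refl
    (ReflTransGen.single (flipStep_sigmaPerm_tauPerm h𝕀 hi hij hjn hE hnot))) ⟨_, hE⟩
  rw [orMap_sigmaPerm rfl (by omega), orMap_rhoPerm rfl hij] at hle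
  simp only [le_refl, true_and] at hle
  split_ifs at hle <;> omega

end Witnesses

section Greedy

variable {A : Edge 𝕀 → ℕ} {σ : Equiv.Perm ℕ}

open scoped Classical in
noncomputable def sources (𝕀 : Finset (Finset ℕ)) (A : Edge 𝕀 → ℕ) (S : Finset ℕ) : Finset ℕ :=
  S.filter fun v => ∀ c ∈ S, ¬ precStep 𝕀 A c v

theorem mem_sources {S : Finset ℕ} {v : ℕ} :
    v ∈ sources 𝕀 A S ↔ v ∈ S ∧ ∀ c ∈ S, ¬ precStep 𝕀 A c v := by
  simp [sources]

theorem sources_nonempty (hA : IsAcyclic 𝕀 A) {S : Finset ℕ} (hS : S.Nonempty) :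
    (sources 𝕀 A S).Nonempty := by
  let r : S → S → Prop := fun c v => prec 𝕀 A c v
  have : IsTrans S r := ⟨fun _ _ _ => TransGen.trans⟩
  have : Std.Irrefl r := ⟨fun a => isAcyclic_iff_forall_not_prec.1 hA a⟩
  obtain ⟨v, -, hv⟩ := (Finite.wellFounded_of_trans_of_irrefl r).has_min Set.univ
    ⟨⟨_, hS.choose_spec⟩, trivial⟩
  exact ⟨v, mem_sources.2 ⟨v.2, fun c hc hcv => hv ⟨c, hc⟩ trivial (TransGen.single hcv)⟩⟩

noncomputable def greedyList (𝕀 : Finset (Finset ℕ)) (A : Edge 𝕀 → ℕ) (S : Finset ℕ) : List ℕ :=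
  if h : (sources 𝕀 A S).Nonempty then
    (sources 𝕀 A S).min' h :: greedyList 𝕀 A (S.erase ((sources 𝕀 A S).min' h))
  else []
termination_by S.card
decreasing_by exact card_erase_lt_of_mem (mem_sources.1 (min'_mem _ h)).1

theorem mem_of_mem_greedyList {S : Finset ℕ} {x : ℕ} (hx : x ∈ greedyList 𝕀 A S) : x ∈ S := by
  fun_induction greedyList 𝕀 A S with
  | case1 S h ih =>
    rcases List.mem_cons.1 hx with rfl | hx
    · exact (mem_sources.1 (min'_mem _ h)).1
    · exact mem_of_mem_erase (ih hx)
  | case2 => simp at hx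

theorem mem_greedyList (hA : IsAcyclic 𝕀 A) {S : Finset ℕ} {x : ℕ} :
    x ∈ greedyList 𝕀 A S ↔ x ∈ S := by
  refine ⟨mem_of_mem_greedyList, fun hx => ?_⟩
  fun_induction greedyList 𝕀 A S with
  | case1 S h ih =>
    by_cases hxb : x = (sources 𝕀 A S).min' h
    exacts [hxb ▸ List.mem_cons_self, List.mem_cons_of_mem _ (ih (mem_erase.2 ⟨hxb, hx⟩))]
  | case2 S h => exact (h (sources_nonempty hA ⟨x, hx⟩)).elim

theorem nodup_greedyList (S : Finset ℕ) : (greedyList 𝕀 A S).Nodup := by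
  fun_induction greedyList 𝕀 A S with
  | case1 S h ih =>
    exact List.nodup_cons.2 ⟨fun hb => (mem_erase.1 (mem_of_mem_greedyList hb)).1 rfl, ih⟩
  | case2 => exact List.nodup_nil

theorem pairwise_greedyList_not_precStep (S : Finset ℕ) :
    (greedyList 𝕀 A S).Pairwise fun x y => ¬ precStep 𝕀 A y x := by
  fun_induction greedyList 𝕀 A S with
  | case1 S h ih =>
    exact List.pairwise_cons.2 ⟨fun y hy => (mem_sources.1 (min'_mem _ h)).2 y
      (mem_of_mem_erase (mem_of_mem_greedyList hy)), ih⟩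
  | case2 => exact List.Pairwise.nil

theorem symm_lt_symm_of_precStep (h𝕀 : IsIntervalHypergraph n 𝕀)
    (hcl : IsClosedUnderInitialSubintervals n 𝕀) (hA : AcycOr 𝕀 A)
    (hσ : ∀ H, A H ≤ orMap 𝕀 σ H) {a c : ℕ} (h : precStep 𝕀 A c a) (hac : a < c) :
    σ.symm c < σ.symm a := by
  obtain ⟨H, rfl, haH, -⟩ := h
  obtain ⟨u, v, hu, -, hv, hH⟩ := h𝕀.1 H.1 H.2
  have hcH := hA.1 H
  rw [hH, mem_Icc] at haH hcH
  have hK : Icc u (A H) ∈ 𝕀 := by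
    rcases hcH.2.eq_or_lt with hcv | hcv
    · exact hcv ▸ hH ▸ H.2
    · exact hcl u (A H) v hu (by omega) hcv hv (hH ▸ H.2)
  let K : Edge 𝕀 := ⟨_, hK⟩
  have hAK : A K = A H := hA.2.apply_eq_of_subset (hH ▸ Icc_subset_Icc le_rfl hcH.2)
    (by simp [K, hcH.1]) (hA.1 K)
  have hσK : orMap 𝕀 σ K = A H := by
    have := hσ K
    have := mem_Icc.1 (orMap_mem (π := σ) (h𝕀.nonempty_s3 K))
    omega
  refine (hσK ▸ symm_orMap_le (π := σ) (H := K) (mem_Icc.2 ⟨haH.1, hac.le⟩)).lt_of_ne ?_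
  exact σ.symm.injective.ne hac.ne'

theorem exists_precStep_gt_of_transGen (h𝕀 : IsIntervalHypergraph n 𝕀) (hA : IsOrientation 𝕀 A)
    {S : Finset ℕ} {u x : ℕ} (h : TransGen (fun a b => a ∈ S ∧ precStep 𝕀 A a b) u x)
    (hxu : x < u) : ∃ c ∈ S, x < c ∧ precStep 𝕀 A c x := by
  induction h using TransGen.head_induction_on with
  | @single u hu => exact ⟨u, hu.1, hxu, hu.2⟩
  | @head u z huz _ ih =>
    rcases lt_trichotomy x z with hxz | rfl | hzx
    · exact ih hxz
    · exact ⟨u, huz.1, hxu, huz.2⟩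
    · obtain ⟨H, hAH, hzH, -⟩ := huz.2
      exact ⟨u, huz.1, hxu, H, hAH,
        h𝕀.mem_of_le_of_le H hzH (hAH ▸ hA H) hzx.le hxu.le, hxu.ne⟩

theorem exists_precStep_gt_of_lt_sources (h𝕀 : IsIntervalHypergraph n 𝕀) (hA : AcycOr 𝕀 A)
    {S : Finset ℕ} {x : ℕ} (hx : x ∈ S) (hxs : x ∉ sources 𝕀 A S)
    (hlt : ∀ v ∈ sources 𝕀 A S, x < v) : ∃ c ∈ S, x < c ∧ precStep 𝕀 A c x := by
  classical
  let U := S.filter fun u => TransGen (fun a b => a ∈ S ∧ precStep 𝕀 A a b) u x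
  have hU : U.Nonempty := by
    obtain ⟨c, hc, hcx⟩ : ∃ c ∈ S, precStep 𝕀 A c x := by
      by_contra! h
      exact hxs (mem_sources.2 ⟨hx, h⟩)
    exact ⟨c, mem_filter.2 ⟨hc, TransGen.single ⟨hc, hcx⟩⟩⟩
  obtain ⟨u, hu⟩ := sources_nonempty hA.2 hU
  obtain ⟨huU, humin⟩ := mem_sources.1 hu
  obtain ⟨huS, hux⟩ := mem_filter.1 huU
  have huS' : u ∈ sources 𝕀 A S := mem_sources.2 ⟨huS, fun c hc hcu =>
    humin c (mem_filter.2 ⟨hc, TransGen.head ⟨hc, hcu⟩ hux⟩) hcu⟩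
  exact exists_precStep_gt_of_transGen h𝕀 hA.1 hux (hlt u huS')

theorem symm_min'_sources_lt (h𝕀 : IsIntervalHypergraph n 𝕀)
    (hcl : IsClosedUnderInitialSubintervals n 𝕀) (hA : AcycOr 𝕀 A)
    (hσ : ∀ H, A H ≤ orMap 𝕀 σ H) {S : Finset ℕ} (hS : (sources 𝕀 A S).Nonempty) {a : ℕ}
    (ha : a ∈ S) (hab : a < (sources 𝕀 A S).min' hS) :
    σ.symm ((sources 𝕀 A S).min' hS) < σ.symm a := by
  have hlt (v) (hv : v ∈ sources 𝕀 A S) : a < v := hab.trans_le (min'_le _ v hv)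
  obtain ⟨c, hc, hac, hca⟩ :=
    exists_precStep_gt_of_lt_sources h𝕀 hA ha (fun h => (hlt a h).false) hlt
  have hσca := symm_lt_symm_of_precStep h𝕀 hcl hA hσ hca hac
  rcases lt_trichotomy c ((sources 𝕀 A S).min' hS) with hcb | hcb | hbc
  · exact (symm_min'_sources_lt h𝕀 hcl hA hσ hS hc hcb).trans hσca
  · exact hcb ▸ hσca
  · obtain ⟨H, hAH, haH, -⟩ := hca
    have hbH := h𝕀.mem_of_le_of_le H haH (hAH ▸ hA.1 H) hab.le hbc.le
    exact absurd ⟨H, hAH, hbH, hbc.ne⟩ ((mem_sources.1 (min'_mem _ hS)).2 c hc)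
termination_by (sources 𝕀 A S).min' hS - a

theorem pairwise_greedyList_symm_lt (h𝕀 : IsIntervalHypergraph n 𝕀)
    (hcl : IsClosedUnderInitialSubintervals n 𝕀) (hA : AcycOr 𝕀 A)
    (hσ : ∀ H, A H ≤ orMap 𝕀 σ H) (S : Finset ℕ) :
    (greedyList 𝕀 A S).Pairwise fun x y => y < x → σ.symm x < σ.symm y := by
  fun_induction greedyList 𝕀 A S with
  | case1 S h ih =>
    exact List.pairwise_cons.2 ⟨fun y hy hlt => symm_min'_sources_lt h𝕀 hcl hA hσ h
      (mem_of_mem_erase (mem_of_mem_greedyList hy)) hlt, ih⟩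
  | case2 => exact List.Pairwise.nil

end Greedy

theorem _root_.List.Pairwise.rel_of_idxOf_lt {α : Type*} [BEq α] [LawfulBEq α]
    {R : α → α → Prop} {L : List α} (hp : L.Pairwise R) {x y : α} (hx : x ∈ L) (hy : y ∈ L)
    (h : L.idxOf x < L.idxOf y) : R x y := by
  have := List.pairwise_iff_getElem.1 hp _ _ (List.idxOf_lt_length_iff.2 hx)
    (List.idxOf_lt_length_iff.2 hy) h
  rwa [List.getElem_idxOf, List.getElem_idxOf] at this

theorem exists_isPermOn_symm_eq_idxOf {L : List ℕ} (hL : ∀ x, x ∈ L ↔ x ∈ Icc 1 n)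
    (hnd : L.Nodup) : ∃ π : Equiv.Perm ℕ, IsPermOn n π ∧ ∀ x ∈ L, π.symm x = L.idxOf x + 1 := by
  have hlen : L.length = n := by
    rw [← List.toFinset_card_of_nodup hnd, show L.toFinset = Icc 1 n by ext; simp [hL],
      Nat.card_Icc, Nat.add_sub_cancel]
  have hL' (x : ℕ) : x ∈ L ↔ 1 ≤ x ∧ x ≤ L.length := by rw [hL, mem_Icc, hlen]
  refine ⟨⟨fun p => if h : 1 ≤ p ∧ p ≤ L.length then L[p - 1] else p,
    fun x => if x ∈ L then L.idxOf x + 1 else x, fun p => ?_, fun x => ?_⟩,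
    fun x hx => dif_neg (by rwa [hlen, ← mem_Icc]), fun x hx => if_pos hx⟩
  · by_cases hp : 1 ≤ p ∧ p ≤ L.length
    · simp only [dif_pos hp, List.getElem_mem, if_true, hnd.idxOf_getElem]
      omega
    · simp only [dif_neg hp, if_neg (mt (hL' p).1 hp)]
  · by_cases hx : x ∈ L
    · have := List.idxOf_lt_length_iff.2 hx
      simp only [if_pos hx, Nat.add_sub_cancel, List.getElem_idxOf]
      exact dif_pos ⟨by omega, by omega⟩
    · simp only [if_neg hx, dif_neg (mt (hL' x).2 hx)]

theorem exists_isPermOn_orMap_eq (h𝕀 : IsIntervalHypergraph n 𝕀)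
    (hcl : IsClosedUnderInitialSubintervals n 𝕀) {A : Edge 𝕀 → ℕ} (hA : AcycOr 𝕀 A) :
    ∃ π, IsPermOn n π ∧ orMap 𝕀 π = A ∧
      ∀ σ : Equiv.Perm ℕ, (∀ H, A H ≤ orMap 𝕀 σ H) → weakLe n π σ := by
  have hL (x : ℕ) : x ∈ greedyList 𝕀 A (Icc 1 n) ↔ x ∈ Icc 1 n := mem_greedyList hA.2
  obtain ⟨π, hπ, hπL⟩ := exists_isPermOn_symm_eq_idxOf hL (nodup_greedyList _)
  refine ⟨π, hπ, funext fun H => orMap_eq_of_forall_le (hA.1 H) fun x hx => ?_,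
    fun σ hσ a b ha hab hb hinv => ?_⟩
  · have hAH := (hL _).2 (h𝕀.subset_Icc_s3 H (hA.1 H))
    have hxL := (hL _).2 (h𝕀.subset_Icc_s3 H hx)
    rw [hπL _ hAH, hπL _ hxL, Nat.add_le_add_iff_right]
    by_contra! hlt
    exact (pairwise_greedyList_not_precStep _).rel_of_idxOf_lt hxL hAH hlt
      ⟨H, rfl, hx, fun h => (h ▸ hlt).false⟩
  · have haL := (hL a).2 (mem_Icc.2 ⟨ha, by omega⟩)
    have hbL := (hL b).2 (mem_Icc.2 ⟨by omega, hb⟩)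
    rw [hπL _ haL, hπL _ hbL] at hinv
    exact (pairwise_greedyList_symm_lt h𝕀 hcl hA hσ _).rel_of_idxOf_lt hbL haL (by omega) hab

theorem orMapPreservesMeets_of_isClosed (h𝕀 : IsIntervalHypergraph n 𝕀)
    (hcl : IsClosedUnderInitialSubintervals n 𝕀) : OrMapPreservesMeets n 𝕀 := by
  rintro σ τ ρ hσ hτ hρ ⟨hρσ, hρτ, hglb⟩
  refine ⟨leP_orMap_of_weakLe h𝕀 hρ hσ hρσ, leP_orMap_of_weakLe h𝕀 hρ hτ hρτ,
    fun C hC hCσ hCτ => ?_⟩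
  obtain ⟨π, hπ, rfl, hπle⟩ := exists_isPermOn_orMap_eq h𝕀 hcl hC
  exact leP_orMap_of_weakLe h𝕀 hπ hρ
    (hglb π hπ (hπle σ (apply_le_of_leP hCσ)) (hπle τ (apply_le_of_leP hCτ)))

end

theorem stmt3_general (n : ℕ) (𝕀 : Finset (Finset ℕ))
    (h𝕀 : IsIntervalHypergraph n 𝕀) :
    (∀ σ τ ρ : Equiv.Perm ℕ, IsPermOn n σ → IsPermOn n τ → IsPermOn n ρ →
      (weakLe n ρ σ ∧ weakLe n ρ τ ∧
        ∀ ρ', IsPermOn n ρ' → weakLe n ρ' σ → weakLe n ρ' τ → weakLe n ρ' ρ) →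
      (leP n 𝕀 (orMap 𝕀 ρ) (orMap 𝕀 σ) ∧ leP n 𝕀 (orMap 𝕀 ρ) (orMap 𝕀 τ) ∧
        ∀ C, AcycOr 𝕀 C → leP n 𝕀 C (orMap 𝕀 σ) → leP n 𝕀 C (orMap 𝕀 τ) →
          leP n 𝕀 C (orMap 𝕀 ρ))) ↔
    (∀ i j k, 1 ≤ i → i < j → j < k → k ≤ n →
      Finset.Icc i k ∈ 𝕀 → Finset.Icc i j ∈ 𝕀) :=
  ⟨isClosed_of_orMapPreservesMeets h𝕀, orMapPreservesMeets_of_isClosed h𝕀⟩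

/-- For an interval hypergraph `𝕀` on `[n]`, the map `π ↦ Or_π` is a
meet semilattice morphism from the weak order to `P_𝕀` (greatest lower bounds are sent
to greatest lower bounds) if and only if `𝕀` is closed under initial subintervals. -/
theorem stmt3 (n : ℕ) (hn : 1 ≤ n) (𝕀 : Finset (Finset ℕ))
    (h𝕀 : IsIntervalHypergraph n 𝕀) :
    (∀ σ τ ρ : Equiv.Perm ℕ, IsPermOn n σ → IsPermOn n τ → IsPermOn n ρ →
      (weakLe n ρ σ ∧ weakLe n ρ τ ∧
        ∀ ρ', IsPermOn n ρ' → weakLe n ρ' σ → weakLe n ρ' τ → weakLe n ρ' ρ) →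
      (leP n 𝕀 (orMap 𝕀 ρ) (orMap 𝕀 σ) ∧ leP n 𝕀 (orMap 𝕀 ρ) (orMap 𝕀 τ) ∧
        ∀ C, AcycOr 𝕀 C → leP n 𝕀 C (orMap 𝕀 σ) → leP n 𝕀 C (orMap 𝕀 τ) →
          leP n 𝕀 C (orMap 𝕀 ρ))) ↔
    (∀ i j k, 1 ≤ i → i < j → j < k → k ≤ n →
      Finset.Icc i k ∈ 𝕀 → Finset.Icc i j ∈ 𝕀) :=
  stmt3_general n 𝕀 h𝕀
end IHL
end

section
/- Let ℋ be a hypergraph on [n] and A an acyclic orientation of ℋ. Then for every permutation π of [n], Or_π = A if and only if π is a linear extension of the partial order ≺_A. In other words, the fiber Or⁻¹(A) is exactly the set of linear extensions of ≺_A. -/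
namespace IHL

/-! `Or_π H` is the element of `H` that comes first in `π`, so `Or_π H = A H` says exactly that
`A H` precedes every other element of `H` in `π`. These are the generating relations of `≺_A`,
and `π` respects a relation iff it respects its transitive closure. -/

theorem orMap_eq_iff {𝕀 : Finset (Finset ℕ)} (π : Equiv.Perm ℕ) (H : Edge 𝕀) {x : ℕ}
    (hx : x ∈ H.1) : orMap 𝕀 π H = x ↔ ∀ h ∈ H.1, h ≠ x → π.symm x < π.symm h := by
  have hxS : π.symm x ∈ {p | π p ∈ H.1} := by simpa using hx
  constructor
  · rintro hmin h hh hne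
    have hxmin : π.symm x = sInf {p | π p ∈ H.1} := by rw [← hmin, orMap, π.symm_apply_apply]
    refine hxmin ▸ (Nat.sInf_le (by simpa using hh)).lt_of_ne fun heq => hne ?_
    rw [← π.apply_symm_apply h, ← heq, ← hxmin, π.apply_symm_apply]
  · intro hleast
    by_contra hne
    have hmin_lt := hleast (π (sInf {p | π p ∈ H.1})) (Nat.sInf_mem ⟨_, hxS⟩) hne
    rw [π.symm_apply_apply] at hmin_lt
    exact (Nat.sInf_le hxS).not_gt hmin_lt

theorem forall_transGen_lt_iff {α β : Type*} [Preorder β] (r : α → α → Prop) (f : α → β) :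
    (∀ a b, Relation.TransGen r a b → f a < f b) ↔ ∀ a b, r a b → f a < f b := by
  refine ⟨fun h a b hab => h a b (.single hab), fun h a b hab => ?_⟩
  simpa only [Relation.transGen_eq_self] using hab.lift (p := (· < ·)) f h

theorem stmt5_general (ℋ : Finset (Finset ℕ))
    (A : Edge ℋ → ℕ) (hA : AcycOr ℋ A)
    (π : Equiv.Perm ℕ) :
    orMap ℋ π = A ↔ ∀ a b, prec ℋ A a b → π.symm a < π.symm b := by
  rw [prec, forall_transGen_lt_iff, funext_iff]
  simp only [orMap_eq_iff π _ (hA.1 _)]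
  constructor
  · rintro h a b ⟨H, rfl, hb, hne⟩
    exact h H b hb hne
  · exact fun h H b hb hne => h _ b ⟨H, rfl, hb, hne⟩

/-- For a hypergraph `ℋ` on `[n]` and an acyclic orientation `A`,
a permutation `π` of `[n]` satisfies `Or_π = A` if and only if `π` is a linear
extension of `≺_A`. -/
theorem stmt5 (n : ℕ) (hn : 1 ≤ n) (ℋ : Finset (Finset ℕ))
    (hℋ : IsHypergraph n ℋ) (A : Edge ℋ → ℕ) (hA : AcycOr ℋ A)
    (π : Equiv.Perm ℕ) (hπ : IsPermOn n π) :
    orMap ℋ π = A ↔ ∀ a b, prec ℋ A a b → π.symm a < π.symm b :=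
  stmt5_general ℋ A hA π
end IHL
end

section
/- Let 𝕀 be an interval hypergraph on [n], A an acyclic orientation of 𝕀, and 1 ≤ i < j ≤ n such that some I ∈ 𝕀 satisfies A(I) = i and j ∈ I. Let B be the orientation obtained from A by flipping i to j, i.e., B(H) = j if A(H) = i and j ∈ H, and B(H) = A(H) otherwise, and let k = max {max(I) : I ∈ 𝕀, A(I) = i}. Then B is acyclic if and only if there is no J ∈ 𝕀 with j ∈ J ∖ {A(J)} and A(J) ∈ (i, k] (i.e., i < A(J) ≤ k). -/
namespace IHL

/-!
An orientation `O` has an arc from `O H` to every other point of `H`, and `O` is acyclic exactly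
when the transitive closure `prec 𝕀 O` of these arcs is irreflexive.

If `J` is an excluded hyperedge, the hyperedge `I` with `A I = i` and `k ∈ I` contains `[i, k]`,
so after the flip `j → A J → j` is a cycle of `B`. Conversely, a cycle of `B` that is not a cycle
of `A` leaves `j` through a flipped hyperedge and later returns to `j`. Every point on the way back
is `A`-reachable from `i`, and once it exceeds `k` it is `A`-reachable from a point of `(j, k]`.
Since hyperedges are intervals, the arc entering `j` then either comes from an excluded hyperedge
or closes a cycle of `A`.
-/

open Relation

theorem transGen_iff_exists_seq {α : Type*} {r : α → α → Prop} {a b : α} :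
    TransGen r a b ↔ ∃ k, 0 < k ∧ ∃ f : ℕ → α, f 0 = a ∧ f k = b ∧ ∀ p < k, r (f p) (f (p + 1)) := by
  constructor
  · intro h
    induction h with
    | @single c hab =>
      refine ⟨1, one_pos, fun p => if p = 0 then a else c, by simp, by simp, fun p hp => ?_⟩
      obtain rfl : p = 0 := by omega
      simpa using hab
    | @tail c d _ hcd ih =>
      obtain ⟨k, hk, f, hf0, hfk, hf⟩ := ih
      refine ⟨k + 1, k.succ_pos, Function.update f (k + 1) d, by simp [hf0], by simp, fun p hp => ?_⟩
      rcases Nat.lt_or_ge p k with hpk | hpk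
      · simpa [Function.update_of_ne (show p ≠ k + 1 by omega),
          Function.update_of_ne (show p + 1 ≠ k + 1 by omega)] using hf p hpk
      · obtain rfl : p = k := by omega
        simpa [Function.update_of_ne (show p ≠ p + 1 by omega), hfk] using hcd
  · rintro ⟨k, hk, f, rfl, rfl, hf⟩
    induction k with
    | zero => omega
    | succ k ih =>
      rcases Nat.eq_zero_or_pos k with rfl | hk
      · exact .single (hf 0 one_pos)
      · exact (ih hk fun p hp => hf p (by omega)).tail (hf k k.lt_succ_self)

def IsArc (𝕀 : Finset (Finset ℕ)) (O : Edge 𝕀 → ℕ) (a b : ℕ) : Prop :=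
  ∃ H : Edge 𝕀, O H = a ∧ b ∈ H.1 ∧ b ≠ a

section Orientation

variable {𝕀 : Finset (Finset ℕ)} {O : Edge 𝕀 → ℕ}

-- `IsAcyclic` speaks of cycles of hyperedges, a step going from `G` to `G'` when `O G' ∈ G \ {O G}`.
theorem exists_transGen_edge_of_transGen_isArc {x y : ℕ} (h : TransGen (IsArc 𝕀 O) x y) :
    ∃ G : Edge 𝕀, O G = x ∧ ∀ G' : Edge 𝕀, O G' = y →
      TransGen (fun G G' : Edge 𝕀 => O G' ∈ G.1 ∧ O G' ≠ O G) G G' := by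
  induction h with
  | single hxy =>
    obtain ⟨G, hG, hyG, hyx⟩ := hxy
    exact ⟨G, hG, fun G' hG' => .single ⟨hG' ▸ hyG, by rwa [hG', hG]⟩⟩
  | tail _ hzy ih =>
    obtain ⟨G, hG, hpath⟩ := ih
    obtain ⟨G₁, hG₁, hyG₁, hyz⟩ := hzy
    exact ⟨G, hG, fun G' hG' => (hpath G₁ hG₁).tail ⟨hG' ▸ hyG₁, by rwa [hG', hG₁]⟩⟩

theorem isAcyclic_iff_irreflexive_prec : IsAcyclic 𝕀 O ↔ ∀ a, ¬prec 𝕀 O a a := by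
  set E : Edge 𝕀 → Edge 𝕀 → Prop := fun G G' => O G' ∈ G.1 ∧ O G' ≠ O G
  have hE : IsAcyclic 𝕀 O ↔ ∀ G, ¬TransGen E G G := by
    simp only [IsAcyclic, transGen_iff_exists_seq, ← not_exists]
    refine not_congr ⟨fun ⟨k, H, hk, hH, hs⟩ => ⟨H 0, k, by omega, H, rfl, hH, hs⟩, ?_⟩
    rintro ⟨G, k, hk, H, hH0, hHk, hs⟩
    have hk1 : k ≠ 1 := by
      rintro rfl
      exact (hs 0 one_pos).2 (by rw [hHk, hH0])
    exact ⟨k, H, by omega, hHk.trans hH0.symm, hs⟩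
  rw [hE]
  constructor
  · intro h a ha
    obtain ⟨G, rfl, hpath⟩ := exists_transGen_edge_of_transGen_isArc ha
    exact h G (hpath G rfl)
  · exact fun h G hG => h _ (hG.lift O fun G G' hGG' => ⟨G, rfl, hGG'.1, hGG'.2⟩)

end Orientation

theorem IsIntervalHypergraph.mem_of_le_of_le_s9 {n : ℕ} {𝕀 : Finset (Finset ℕ)}
    (h𝕀 : IsIntervalHypergraph n 𝕀) (H : Edge 𝕀) {x y z : ℕ} (hx : x ∈ H.1) (hz : z ∈ H.1)
    (hxy : x ≤ y) (hyz : y ≤ z) : y ∈ H.1 := by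
  obtain ⟨a, b, -, -, -, hH⟩ := h𝕀.1 H.1 H.2
  rw [hH, Finset.mem_Icc] at hx hz ⊢
  omega

def IsFlip (𝕀 : Finset (Finset ℕ)) (A : Edge 𝕀 → ℕ) (i j : ℕ) (B : Edge 𝕀 → ℕ) : Prop :=
  ∀ H : Edge 𝕀, (A H = i ∧ j ∈ H.1 → B H = j) ∧ (¬(A H = i ∧ j ∈ H.1) → B H = A H)

namespace IsFlip

variable {𝕀 : Finset (Finset ℕ)} {A B : Edge 𝕀 → ℕ} {i j : ℕ} (hB : IsFlip 𝕀 A i j B)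
include hB

theorem isArc_cases {x y : ℕ} (h : IsArc 𝕀 B x y) :
    IsArc 𝕀 A x y ∨ x = j ∧ ∃ H : Edge 𝕀, A H = i ∧ j ∈ H.1 ∧ y ∈ H.1 ∧ y ≠ j := by
  obtain ⟨H, rfl, hyH, hyx⟩ := h
  by_cases hf : A H = i ∧ j ∈ H.1
  · rw [(hB H).1 hf] at hyx ⊢
    exact .inr ⟨rfl, H, hf.1, hf.2, hyH, hyx⟩
  · rw [(hB H).2 hf] at hyx ⊢
    exact .inl ⟨H, rfl, hyH, hyx⟩

theorem exists_unflipped_of_isArc {x y : ℕ} (hxj : x ≠ j) (h : IsArc 𝕀 B x y) :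
    ∃ H : Edge 𝕀, A H = x ∧ y ∈ H.1 ∧ y ≠ x ∧ ¬(x = i ∧ j ∈ H.1) := by
  obtain ⟨H, rfl, hyH, hyx⟩ := h
  have hf : ¬(A H = i ∧ j ∈ H.1) := fun hf => hxj ((hB H).1 hf)
  rw [(hB H).2 hf] at hyx ⊢
  exact ⟨H, rfl, hyH, hyx, hf⟩

theorem transGen_cases {a : ℕ} (h : TransGen (IsArc 𝕀 B) a a) :
    TransGen (IsArc 𝕀 A) a a ∨
      ∃ b, (∃ H : Edge 𝕀, A H = i ∧ j ∈ H.1 ∧ b ∈ H.1 ∧ b ≠ j) ∧ ReflTransGen (IsArc 𝕀 B) b j := by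
  suffices ∀ y, TransGen (IsArc 𝕀 B) a y → TransGen (IsArc 𝕀 A) a y ∨
      ∃ b, (∃ H : Edge 𝕀, A H = i ∧ j ∈ H.1 ∧ b ∈ H.1 ∧ b ≠ j) ∧
        ReflTransGen (IsArc 𝕀 B) b y ∧ ReflTransGen (IsArc 𝕀 B) a j by
    rcases this a h with hA | ⟨b, hb, hba, haj⟩
    · exact .inl hA
    · exact .inr ⟨b, hb, hba.trans haj⟩
  intro y hy
  induction hy with
  | single hay =>
    rcases hB.isArc_cases hay with hA | ⟨rfl, hb⟩
    · exact .inl (.single hA)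
    · exact .inr ⟨_, hb, .refl, .refl⟩
  | tail haz hzy ih =>
    rcases hB.isArc_cases hzy with hA | ⟨rfl, hb⟩
    · rcases ih with ih | ⟨b, hb, hbz, haj⟩
      · exact .inl (ih.tail hA)
      · exact .inr ⟨b, hb, hbz.tail hzy, haj⟩
    · exact .inr ⟨_, hb, .refl, haz.to_reflTransGen⟩

end IsFlip

-- Satisfied by every point of a `B`-path that starts with a flipped arc out of `j`.
def FlipInv (𝕀 : Finset (Finset ℕ)) (A : Edge 𝕀 → ℕ) (i j k x : ℕ) : Prop :=
  x ≠ j ∧ ReflTransGen (IsArc 𝕀 A) i x ∧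
    (k < x → ∃ d, j < d ∧ d ≤ k ∧ TransGen (IsArc 𝕀 A) d x)

section FlipCriterion

variable {n k : ℕ} {𝕀 : Finset (Finset ℕ)} {A B : Edge 𝕀 → ℕ} {i j : ℕ}
  (h𝕀 : IsIntervalHypergraph n 𝕀) (hA : AcycOr 𝕀 A) (hB : IsFlip 𝕀 A i j B)
  (hij : i < j) (hjk : j ≤ k)
  (hno : ¬∃ J : Edge 𝕀, j ∈ J.1 ∧ j ≠ A J ∧ i < A J ∧ A J ≤ k)

include h𝕀 hA hij hno in
theorem notMem_of_reflTransGen {H : Edge 𝕀} (hreach : ReflTransGen (IsArc 𝕀 A) i (A H))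
    (hHi : A H ≠ i) (hHj : A H ≠ j) (hHk : A H ≤ k) : j ∉ H.1 := by
  intro hjH
  rcases hHi.lt_or_gt with hlt | hgt
  · have hiH : i ∈ H.1 := h𝕀.mem_of_le_of_le_s9 H (hA.1 H) hjH hlt.le hij.le
    exact isAcyclic_iff_irreflexive_prec.1 hA.2 i (.tail' hreach ⟨H, rfl, hiH, hHi.symm⟩)
  · exact hno ⟨H, hjH, hHj.symm, hgt, hHk⟩

include h𝕀 hA hB hij hjk hno in
theorem FlipInv.of_isArc {x y : ℕ} (hx : FlipInv 𝕀 A i j k x) (hxy : IsArc 𝕀 B x y) :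
    FlipInv 𝕀 A i j k y := by
  obtain ⟨hxj, hix, hdx⟩ := hx
  obtain ⟨H, rfl, hyH, hyx, hunflipped⟩ := hB.exists_unflipped_of_isArc hxj hxy
  have hxH : A H ∈ H.1 := hA.1 H
  have harc : IsArc 𝕀 A (A H) y := ⟨H, rfl, hyH, hyx⟩
  have hjH (hHk : A H ≤ k) : j ∉ H.1 := fun hjH =>
    notMem_of_reflTransGen h𝕀 hA hij hno hix (fun h => hunflipped ⟨h, hjH⟩) hxj hHk hjH
  have hyj : y ≠ j := by
    rintro rfl
    rcases le_or_gt (A H) k with hHk | hkH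
    · exact hjH hHk hyH
    · obtain ⟨d, hjd, hdk, hdH⟩ := hdx hkH
      have hd : d ∈ H.1 := h𝕀.mem_of_le_of_le_s9 H hyH hxH hjd.le (by omega)
      exact isAcyclic_iff_irreflexive_prec.1 hA.2 d (hdH.tail ⟨H, rfl, hd, by omega⟩)
  refine ⟨hyj, hix.tail harc, fun hky => ?_⟩
  rcases le_or_gt (A H) k with hHk | hkH
  · refine ⟨A H, ?_, hHk, .single harc⟩
    by_contra! hHj
    exact hjH hHk (h𝕀.mem_of_le_of_le_s9 H hxH hyH hHj (hjk.trans hky.le))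
  · obtain ⟨d, hjd, hdk, hdH⟩ := hdx hkH
    exact ⟨d, hjd, hdk, hdH.tail harc⟩

include h𝕀 hA hB hij hjk hno in
theorem FlipInv.of_reflTransGen {x y : ℕ} (hx : FlipInv 𝕀 A i j k x)
    (hxy : ReflTransGen (IsArc 𝕀 B) x y) : FlipInv 𝕀 A i j k y := by
  induction hxy with
  | refl => exact hx
  | tail _ hyz ih => exact ih.of_isArc h𝕀 hA hB hij hjk hno hyz

theorem flipInv_of_mem (hk : IsGreatest {m | ∃ H : Edge 𝕀, A H = i ∧ m ∈ H.1} k) {H : Edge 𝕀}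
    {b : ℕ} (hHi : A H = i) (hbH : b ∈ H.1) (hbj : b ≠ j) : FlipInv 𝕀 A i j k b := by
  refine ⟨hbj, ?_, fun hkb => absurd (hk.2 ⟨H, hHi, hbH⟩) hkb.not_ge⟩
  by_cases hbi : b = i
  · exact hbi ▸ .refl
  · exact .single ⟨H, hHi, hbH, hbi⟩

include h𝕀 hA hB hij hjk hno in
theorem not_prec_flip_self (hk : IsGreatest {m | ∃ H : Edge 𝕀, A H = i ∧ m ∈ H.1} k) (a : ℕ) :
    ¬prec 𝕀 B a a := by
  intro ha
  rcases hB.transGen_cases ha with hAa | ⟨b, ⟨H, hHi, -, hbH, hbj⟩, hbj'⟩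
  · exact isAcyclic_iff_irreflexive_prec.1 hA.2 a hAa
  · exact ((flipInv_of_mem hk hHi hbH hbj).of_reflTransGen h𝕀 hA hB hij hjk hno hbj').1 rfl

end FlipCriterion

theorem prec_flip_self_of_mem {n k : ℕ} {𝕀 : Finset (Finset ℕ)} {A B : Edge 𝕀 → ℕ} {i j : ℕ}
    (h𝕀 : IsIntervalHypergraph n 𝕀) (hA : IsOrientation 𝕀 A) (hB : IsFlip 𝕀 A i j B)
    (hij : i < j) (hjk : j ≤ k) (hk : ∃ H : Edge 𝕀, A H = i ∧ k ∈ H.1) {J : Edge 𝕀}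
    (hjJ : j ∈ J.1) (hJj : j ≠ A J) (hiJ : i < A J) (hJk : A J ≤ k) : prec 𝕀 B j j := by
  obtain ⟨H, hHi, hkH⟩ := hk
  have hiH : i ∈ H.1 := hHi ▸ hA H
  have hBH : B H = j := (hB H).1 ⟨hHi, h𝕀.mem_of_le_of_le_s9 H hiH hkH hij.le hjk⟩
  have hBJ : B J = A J := (hB J).2 fun h => hiJ.ne' h.1
  exact .head ⟨H, hBH, h𝕀.mem_of_le_of_le_s9 H hiH hkH hiJ.le hJk, hJj.symm⟩
    (.single ⟨J, hBJ, hjJ, hJj⟩)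

theorem stmt9_general (n : ℕ) (𝕀 : Finset (Finset ℕ))
    (h𝕀 : IsIntervalHypergraph n 𝕀) (A : Edge 𝕀 → ℕ) (hA : AcycOr 𝕀 A)
    (i j : ℕ) (hij : i < j)
    (hI : ∃ I : Edge 𝕀, A I = i ∧ j ∈ I.1)
    (k : ℕ) (hk : IsGreatest {m | ∃ H : Edge 𝕀, A H = i ∧ m ∈ H.1} k)
    (B : Edge 𝕀 → ℕ)
    (hB : ∀ H : Edge 𝕀, (A H = i ∧ j ∈ H.1 → B H = j) ∧
      (¬(A H = i ∧ j ∈ H.1) → B H = A H)) :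
    IsAcyclic 𝕀 B ↔ ¬∃ J : Edge 𝕀, j ∈ J.1 ∧ j ≠ A J ∧ i < A J ∧ A J ≤ k := by
  have hjk : j ≤ k := by
    obtain ⟨I, hIi, hjI⟩ := hI
    exact hk.2 ⟨I, hIi, hjI⟩
  rw [isAcyclic_iff_irreflexive_prec]
  constructor
  · rintro hBac ⟨J, hjJ, hJj, hiJ, hJk⟩
    exact hBac j (prec_flip_self_of_mem h𝕀 hA.1 hB hij hjk hk.1 hjJ hJj hiJ hJk)
  · exact fun hno => not_prec_flip_self h𝕀 hA hB hij hjk hno hk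

/-- Criterion for an increasing flip to produce an acyclic
orientation: with `k = max {max I : I ∈ 𝕀, A(I) = i}`, the orientation `B` obtained
from `A` by flipping `i` to `j` is acyclic iff there is no `J ∈ 𝕀` with
`j ∈ J \ {A(J)}` and `A(J) ∈ (i, k]`. -/
theorem stmt9 (n : ℕ) (hn : 1 ≤ n) (𝕀 : Finset (Finset ℕ))
    (h𝕀 : IsIntervalHypergraph n 𝕀) (A : Edge 𝕀 → ℕ) (hA : AcycOr 𝕀 A)
    (i j : ℕ) (hi : 1 ≤ i) (hij : i < j) (hj : j ≤ n)
    (hI : ∃ I : Edge 𝕀, A I = i ∧ j ∈ I.1)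
    (k : ℕ) (hk : IsGreatest {m | ∃ H : Edge 𝕀, A H = i ∧ m ∈ H.1} k)
    (B : Edge 𝕀 → ℕ)
    (hB : ∀ H : Edge 𝕀, (A H = i ∧ j ∈ H.1 → B H = j) ∧
      (¬(A H = i ∧ j ∈ H.1) → B H = A H)) :
    IsAcyclic 𝕀 B ↔ ¬∃ J : Edge 𝕀, j ∈ J.1 ∧ j ≠ A J ∧ i < A J ∧ A J ≤ k :=
  stmt9_general n 𝕀 h𝕀 A hA i j hij hI k hk B hB
end IHL
end
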